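/- arXiv:2604.20612 — 12 statements merged into one kernel-verified Lean document; each statement's English description precedes it below -/
import Mathlib

section
/- A function E : ℤ≥0 → [0,∞) is an e-value for ℳ (i.e. ∑_n E(n) f_P(n) ≤ 1 for every P ∈ ℳ) if and only if there exists a nondecreasing function ρ : ℤ≥0 → [0,∞) with ρ(0) = 0 and ρ(n) ≤ n for all n ∈ ℤ≥0, such that E(n) = ρ(n+1) − ρ(n) for all n ∈ ℤ≥0. -/
open MeasureTheory ENNReal

/-- `ℳ`: monotone probability distributions on `ℤ≥0`. -/
def MonotoneClass : Set (Measure ℕ) :=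
  {P | IsProbabilityMeasure P ∧ ∀ n : ℕ, P {n + 1} ≤ P {n}}

/-!
Testing `E` against the uniform distribution on `{0, …, n - 1}`, which is monotone, shows that
`ρ(n) := ∑_{k<n} E(k) ≤ n`. Conversely, if all these partial sums are at most `n`, then Abel
summation bounds `∑ E(n) f(n)` by `∑ f(n) = 1` for every nonincreasing `f ≥ 0`; equivalently,
every monotone distribution is a mixture of the uniform ones.
-/

open Finset ProbabilityTheory

theorem sum_range_mul_le_sum_range_of_antitone {R : Type*} [CommRing R] [LinearOrder R]
    [IsStrictOrderedRing R] {a g : ℕ → R} (ha : ∀ n, ∑ k ∈ range n, a k ≤ n) (hg0 : ∀ n, 0 ≤ g n)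
    (hg : Antitone g) (N : ℕ) :
    ∑ n ∈ range N, a n * g n ≤ ∑ n ∈ range N, g n := by
  -- Abel summation: the unspent budget `N - ∑_{k<N} a k ≥ 0` is carried along with weight `g N`.
  have carry : ∀ N, ∑ n ∈ range N, a n * g n + (N - ∑ k ∈ range N, a k) * g N
      ≤ ∑ n ∈ range N, g n := by
    intro N
    induction N with
    | zero => simp
    | succ N ih =>
      have hslack : (0 : R) ≤ N + 1 - ∑ k ∈ range (N + 1), a k := by
        have := ha (N + 1); push_cast at this; linarith
      have hstep := mul_le_mul_of_nonneg_left (hg N.le_succ) hslack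
      simp only [sum_range_succ, Nat.cast_succ] at hstep ⊢
      linarith
  have hslack : (0 : R) ≤ N - ∑ k ∈ range N, a k := sub_nonneg.2 (ha N)
  linarith [carry N, mul_nonneg hslack (hg0 N)]

theorem uniformOn_range_singleton (n k : ℕ) :
    uniformOn (range n : Set ℕ) {k} = if k < n then (n : ℝ≥0∞)⁻¹ else 0 := by
  rw [← coe_singleton, uniformOn_apply_finset, card_range]
  split_ifs with hk
  · simp [inter_singleton_of_mem (mem_range.2 hk)]
  · simp [inter_singleton_of_notMem (mem_range.not.2 hk)]

theorem uniformOn_range_mem_monotoneClass {n : ℕ} (hn : 0 < n) :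
    uniformOn (range n : Set ℕ) ∈ MonotoneClass := by
  refine ⟨isProbabilityMeasure_uniformOn (range n).finite_toSet (by simpa using hn.ne'),
    fun k => ?_⟩
  simp only [uniformOn_range_singleton]
  split_ifs <;> first | rfl | exact bot_le | omega

theorem sum_range_le_of_isEValue {E : ℕ → NNReal}
    (hE : ∀ P ∈ MonotoneClass, ∑' n : ℕ, (E n : ℝ≥0∞) * P {n} ≤ 1) (n : ℕ) :
    ∑ k ∈ range n, (E k : ℝ) ≤ n := by
  rcases n.eq_zero_or_pos with rfl | hn
  · simp
  have h := hE _ (uniformOn_range_mem_monotoneClass hn)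
  rw [tsum_eq_sum (s := range n) fun k hk => by
    rw [uniformOn_range_singleton, if_neg (by simpa using hk), mul_zero]] at h
  have hsum : ∑ k ∈ range n, (E k : ℝ≥0∞) ≤ n := by
    rwa [sum_congr rfl fun k hk => by rw [uniformOn_range_singleton, if_pos (mem_range.1 hk)],
      ← sum_mul, ← div_eq_mul_inv, ENNReal.div_le_iff (by simpa using hn.ne') (by simp),
      one_mul] at h
  exact_mod_cast hsum

theorem tsum_mul_le_one_of_sum_range_le {E : ℕ → NNReal}
    (hE : ∀ n, ∑ k ∈ range n, (E k : ℝ) ≤ n) {P : Measure ℕ} (hP : P ∈ MonotoneClass) :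
    ∑' n : ℕ, (E n : ℝ≥0∞) * P {n} ≤ 1 := by
  obtain ⟨hprob, hmono⟩ := hP
  have hanti : Antitone fun n => P.real {n} :=
    antitone_nat_of_succ_le fun n => ENNReal.toReal_mono (measure_ne_top P _) (hmono n)
  refine ENNReal.tsum_le_of_sum_range_le fun N => ?_
  calc ∑ n ∈ range N, (E n : ℝ≥0∞) * P {n}
      = ENNReal.ofReal (∑ n ∈ range N, (E n : ℝ) * P.real {n}) := by
        rw [ENNReal.ofReal_sum_of_nonneg fun n _ => by positivity]
        simp [ENNReal.ofReal_mul, ofReal_measureReal]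
    _ ≤ ENNReal.ofReal (∑ n ∈ range N, P.real {n}) :=
        ENNReal.ofReal_le_ofReal <| sum_range_mul_le_sum_range_of_antitone hE
          (fun _ => measureReal_nonneg) hanti N
    _ ≤ 1 := by
        rw [sum_measureReal_singleton]
        exact ENNReal.ofReal_le_one.2 measureReal_le_one

theorem isEValue_monotoneClass_iff_sum_range_le (E : ℕ → NNReal) :
    (∀ P ∈ MonotoneClass, ∑' n : ℕ, (E n : ℝ≥0∞) * P {n} ≤ 1) ↔
      ∀ n, ∑ k ∈ range n, (E k : ℝ) ≤ n :=
  ⟨sum_range_le_of_isEValue, fun hE _ => tsum_mul_le_one_of_sum_range_le hE⟩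

/-- **polar of `ℳ`.** A function `E : ℤ≥0 → [0,∞)` is an e-value for `ℳ`
iff there is a nondecreasing `ρ : ℤ≥0 → [0,∞)` with `ρ(0) = 0` and `ρ(n) ≤ n`, such that
`E(n) = ρ(n+1) − ρ(n)` for all `n`. -/
theorem stmt2 (E : ℕ → NNReal) :
    (∀ P ∈ MonotoneClass, ∑' n : ℕ, (E n : ℝ≥0∞) * P {n} ≤ 1) ↔
      ∃ ρ : ℕ → ℝ, (∀ n, 0 ≤ ρ n) ∧ Monotone ρ ∧ ρ 0 = 0 ∧ (∀ n : ℕ, ρ n ≤ n) ∧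
        ∀ n : ℕ, (E n : ℝ) = ρ (n + 1) - ρ n := by
  rw [isEValue_monotoneClass_iff_sum_range_le]
  constructor
  · intro hE
    refine ⟨fun n => ∑ k ∈ range n, (E k : ℝ), fun n => sum_nonneg fun k _ => (E k).coe_nonneg,
      monotone_nat_of_le_succ fun n => ?_, sum_range_zero _, hE, fun n => ?_⟩
    · simp [sum_range_succ]
    · simp [sum_range_succ]
  · rintro ⟨ρ, -, -, hρ0, hρ, hE⟩ n
    simpa only [hE, sum_range_sub, hρ0, sub_zero] using hρ n
end

section
/- Fix θ ∈ ℤ. A function E : ℤ → [0,∞) is an e-value for 𝒟_θ (i.e. ∑_n E(n) f_P(n) ≤ 1 for every P ∈ 𝒟_θ) if and only if there exist nondecreasing real sequences (ρ_n)_{n≥1} and (η_n)_{n≥1} with ρ_n ≤ n and η_n ≤ n for all n ≥ 1 and ρ_1 + η_1 ≥ 1, such that E(n) = ρ_{n−θ+1} − ρ_{n−θ} for all n > θ, E(θ) = ρ_1 + η_1 − 1, and E(n) = η_{θ−n+1} − η_{θ−n} for all n < θ. -/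
/-!
The uniform distributions on the windows `{θ - b, …, θ + a}` are θ-unimodal, so an e-value has
`E θ + ∑_{0 < k ≤ a} E (θ + k) + ∑_{0 < k ≤ b} E (θ - k) ≤ a + b + 1` for all `a, b`. Taking
`ρ₁ = inf_a (a + 1 - ∑_{0 < k ≤ a} E (θ + k))` and letting `ρ`, `η` accumulate the values of `E`
to the right and to the left of `θ` turns these inequalities exactly into `ρ_n ≤ n`, `η_n ≤ n`.

Conversely, by Abel summation, for a sequence `g` that decreases away from `θ` the bound
`ρ_n ≤ n` gives `ρ₁ g₀ + ∑ (ρ_{k+1} - ρ_k) g_k ≤ ∑ g_k`, so `∑ E(n) f_P(n)` is at most the total mass of `P`.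
-/

open MeasureTheory ENNReal

/-- `𝒟_θ`: θ-unimodal probability distributions on `ℤ`. -/
def UnimodalClass (θ : ℤ) : Set (Measure ℤ) :=
  {P | IsProbabilityMeasure P ∧ (∀ n : ℤ, n ≤ θ → P {n - 1} ≤ P {n}) ∧
    (∀ n : ℤ, θ ≤ n → P {n + 1} ≤ P {n})}

open Finset

noncomputable def window (θ : ℤ) (a b : ℕ) : Finset ℤ := Finset.Icc (θ - b) (θ + a)

lemma sum_window {M : Type*} [AddCommMonoid M] (w : ℤ → M) (θ : ℤ) (a b : ℕ) :
    ∑ n ∈ window θ a b, w n =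
      w θ + ∑ k ∈ range a, w (θ + (k + 1)) + ∑ k ∈ range b, w (θ - (k + 1)) := by
  induction a with
  | zero =>
    induction b with
    | zero => simp [window]
    | succ b ih =>
      have hins : window θ 0 (b + 1) = insert (θ - (b + 1)) (window θ 0 b) := by
        ext; simp only [window, mem_insert, mem_Icc]; push_cast; omega
      rw [hins, sum_insert (by simp [window]; omega), ih, sum_range_succ]
      simp only [range_zero, sum_empty]
      abel
  | succ a ih =>
    have hins : window θ (a + 1) b = insert (θ + (a + 1)) (window θ a b) := by
      ext; simp only [window, mem_insert, mem_Icc]; push_cast; omega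
    rw [hins, sum_insert (by simp [window]), ih, sum_range_succ]
    abel

lemma sum_range_sub_mul_le_sum_range {σ g : ℕ → ℝ} (hσ : ∀ k, σ k ≤ k + 1) (hg : Antitone g)
    (hg0 : ∀ k, 0 ≤ g k) (M : ℕ) :
    σ 0 * g 0 + ∑ k ∈ range M, (σ (k + 1) - σ k) * g (k + 1) ≤ ∑ k ∈ range (M + 1), g k := by
  -- the slack `(σ M - (M + 1)) * g M` is nonpositive and can only grow with `M`, as `g` decreases
  have slack : ∀ M : ℕ, σ 0 * g 0 + ∑ k ∈ range M, (σ (k + 1) - σ k) * g (k + 1) ≤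
      ∑ k ∈ range (M + 1), g k + (σ M - (M + 1)) * g M := by
    intro M
    induction M with
    | zero =>
      simp only [range_zero, sum_empty, add_zero, zero_add, range_one, sum_singleton, CharP.cast_eq_zero]
      linarith
    | succ M ih =>
      have : (σ M - (M + 1)) * g M ≤ (σ M - (M + 1)) * g (M + 1) :=
        mul_le_mul_of_nonpos_left (hg M.le_succ) (by linarith [hσ M])
      rw [sum_range_succ, sum_range_succ (n := M + 1)]
      push_cast
      linarith
  linarith [slack M, mul_nonpos_of_nonpos_of_nonneg (by linarith [hσ M] : σ M - (M + 1) ≤ 0) (hg0 M)]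

lemma sum_window_mul_le_sum_window {θ : ℤ} {p e : ℤ → ℝ} {ρ η : ℕ → ℝ} (hp0 : ∀ n, 0 ≤ p n)
    (hL : ∀ n, n ≤ θ → p (n - 1) ≤ p n) (hR : ∀ n, θ ≤ n → p (n + 1) ≤ p n)
    (hρ : ∀ n : ℕ, 1 ≤ n → ρ n ≤ n) (hη : ∀ n : ℕ, 1 ≤ n → η n ≤ n)
    (hright : ∀ k : ℕ, e (θ + (k + 1)) = ρ (k + 2) - ρ (k + 1)) (hθ : e θ = ρ 1 + η 1 - 1)
    (hleft : ∀ k : ℕ, e (θ - (k + 1)) = η (k + 2) - η (k + 1)) (N : ℕ) :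
    ∑ n ∈ window θ N N, e n * p n ≤ ∑ n ∈ window θ N N, p n := by
  have hpR : Antitone fun k : ℕ => p (θ + k) := antitone_nat_of_succ_le fun k => by
    simpa [add_assoc] using hR (θ + k) (by omega)
  have hpL : Antitone fun k : ℕ => p (θ - k) := antitone_nat_of_succ_le fun k => by
    simpa [sub_sub] using hL (θ - k) (by omega)
  have abelR := sum_range_sub_mul_le_sum_range (σ := fun k => ρ (k + 1))
    (fun k => by exact_mod_cast hρ (k + 1) (by omega)) hpR (fun _ => hp0 _) N
  have abelL := sum_range_sub_mul_le_sum_range (σ := fun k => η (k + 1))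
    (fun k => by exact_mod_cast hη (k + 1) (by omega)) hpL (fun _ => hp0 _) N
  rw [sum_range_succ'] at abelR abelL
  push_cast at abelR abelL
  simp only [sum_window, hright, hθ, hleft]
  simp only [add_zero, sub_zero] at abelR abelL
  linarith

lemma tsum_le_of_forall_sum_window_le {f : ℤ → ℝ≥0∞} {c : ℝ≥0∞} (θ : ℤ)
    (h : ∀ N, ∑ n ∈ window θ N N, f n ≤ c) : ∑' n, f n ≤ c := by
  rw [ENNReal.tsum_eq_iSup_sum]
  refine iSup_le fun s =>
    (sum_le_sum_of_subset fun n hn => ?_).trans (h (s.sup fun n => (n - θ).natAbs))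
  have := le_sup (f := fun n => (n - θ).natAbs) hn
  simp only [window, Finset.mem_Icc]
  omega

lemma tsum_mul_le_one_of_mem_unimodalClass {θ : ℤ} {E : ℤ → NNReal} {ρ η : ℕ → ℝ}
    (hρ : ∀ n : ℕ, 1 ≤ n → ρ n ≤ n) (hη : ∀ n : ℕ, 1 ≤ n → η n ≤ n)
    (hright : ∀ k : ℕ, (E (θ + (k + 1)) : ℝ) = ρ (k + 2) - ρ (k + 1))
    (hθ : (E θ : ℝ) = ρ 1 + η 1 - 1)
    (hleft : ∀ k : ℕ, (E (θ - (k + 1)) : ℝ) = η (k + 2) - η (k + 1))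
    {P : Measure ℤ} (hP : P ∈ UnimodalClass θ) : ∑' n, (E n : ℝ≥0∞) * P {n} ≤ 1 := by
  obtain ⟨hprob, hL, hR⟩ := hP
  have hP_ofReal : ∀ n, P {n} = ENNReal.ofReal (P {n}).toReal :=
    fun n => (ofReal_toReal (measure_ne_top P _)).symm
  have hp0 : ∀ n, 0 ≤ (P {n}).toReal := fun _ => toReal_nonneg
  refine tsum_le_of_forall_sum_window_le θ fun N => ?_
  calc ∑ n ∈ window θ N N, (E n : ℝ≥0∞) * P {n}
      = ENNReal.ofReal (∑ n ∈ window θ N N, E n * (P {n}).toReal) := by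
        rw [ofReal_sum_of_nonneg fun n _ => mul_nonneg (E n).coe_nonneg (hp0 n)]
        refine sum_congr rfl fun n _ => ?_
        rw [ofReal_mul (E n).coe_nonneg, ofReal_coe_nnreal, ← hP_ofReal]
    _ ≤ ENNReal.ofReal (∑ n ∈ window θ N N, (P {n}).toReal) := by
        refine ofReal_le_ofReal (sum_window_mul_le_sum_window hp0 (fun n hn => ?_)
          (fun n hn => ?_) hρ hη hright hθ hleft N)
        · exact toReal_mono (measure_ne_top P _) (hL n hn)
        · exact toReal_mono (measure_ne_top P _) (hR n hn)
    _ = P (window θ N N) := by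
        rw [ofReal_sum_of_nonneg fun n _ => hp0 n, ← sum_measure_singleton]
        exact sum_congr rfl fun n _ => (hP_ofReal n).symm
    _ ≤ 1 := prob_le_one

lemma window_nonempty (θ : ℤ) (a b : ℕ) : (window θ a b).Nonempty :=
  ⟨θ, by simp [window]⟩

lemma card_window (θ : ℤ) (a b : ℕ) : #(window θ a b) = a + b + 1 := by
  simp only [window, Int.card_Icc]
  omega

lemma uniformOfFinset_window_mem_unimodalClass (θ : ℤ) (a b : ℕ) :
    (PMF.uniformOfFinset (window θ a b) (window_nonempty θ a b)).toMeasure ∈ UnimodalClass θ := by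
  refine ⟨inferInstance, fun n hn => ?_, fun n hn => ?_⟩ <;>
  · simp only [PMF.toMeasure_apply_singleton _ _ (measurableSet_singleton _),
      PMF.uniformOfFinset_apply, window, Finset.mem_Icc]
    split_ifs <;> first | exact le_rfl | exact zero_le | (exfalso; omega)

lemma sum_window_le_of_isEValue {θ : ℤ} {E : ℤ → NNReal}
    (hE : ∀ P ∈ UnimodalClass θ, ∑' n : ℤ, (E n : ℝ≥0∞) * P {n} ≤ 1) (a b : ℕ) :
    ∑ n ∈ window θ a b, (E n : ℝ) ≤ a + b + 1 := by
  have h := hE _ (uniformOfFinset_window_mem_unimodalClass θ a b)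
  simp only [PMF.toMeasure_apply_singleton _ _ (measurableSet_singleton _),
    PMF.uniformOfFinset_apply, mul_ite, mul_zero] at h
  rw [tsum_eq_sum (s := window θ a b) (fun n hn => if_neg hn), sum_ite_mem, inter_self,
    ← sum_mul, card_window, ENNReal.mul_inv_le_iff (by positivity) (by simp), one_mul] at h
  exact_mod_cast h

lemma exists_increments_of_partial_sums_le {c : ℝ} {u v : ℕ → ℝ} (hc : 0 ≤ c)
    (hu : ∀ k, 0 ≤ u k) (hv : ∀ k, 0 ≤ v k)
    (hbound : ∀ a b : ℕ, c + ∑ k ∈ range a, u k + ∑ k ∈ range b, v k ≤ a + b + 1) :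
    ∃ ρ η : ℕ → ℝ,
      (∀ n : ℕ, 1 ≤ n → ρ n ≤ ρ (n + 1)) ∧ (∀ n : ℕ, 1 ≤ n → η n ≤ η (n + 1)) ∧
      (∀ n : ℕ, 1 ≤ n → ρ n ≤ n) ∧ (∀ n : ℕ, 1 ≤ n → η n ≤ n) ∧ 1 ≤ ρ 1 + η 1 ∧
      (∀ k : ℕ, u k = ρ (k + 2) - ρ (k + 1)) ∧ c = ρ 1 + η 1 - 1 ∧
      (∀ k : ℕ, v k = η (k + 2) - η (k + 1)) := by
  set A := ⨅ a : ℕ, ((a : ℝ) + 1 - ∑ k ∈ range a, u k)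
  have hbdd : BddBelow (Set.range fun a : ℕ => (a : ℝ) + 1 - ∑ k ∈ range a, u k) := by
    refine ⟨c, ?_⟩
    rintro _ ⟨a, rfl⟩
    have := hbound a 0
    simp only [sum_range_zero, Nat.cast_zero, add_zero] at this
    show c ≤ a + 1 - _
    linarith
  have hA_le (a : ℕ) : A ≤ a + 1 - ∑ k ∈ range a, u k := ciInf_le hbdd a
  have le_hA (b : ℕ) : c + ∑ k ∈ range b, v k - b ≤ A :=
    le_ciInf fun a => by linarith [hbound a b]
  refine ⟨fun n => A + ∑ k ∈ range (n - 1), u k, fun n => 1 + c - A + ∑ k ∈ range (n - 1), v k,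
    fun n hn => ?_, fun n hn => ?_, fun n hn => ?_, fun n hn => ?_, ?_, fun k => ?_, ?_,
    fun k => ?_⟩
  all_goals try obtain ⟨m, rfl⟩ := Nat.exists_eq_add_of_le' hn
  · simp [sum_range_succ, hu m]
  · simp [sum_range_succ, hv m]
  · simp only [Nat.add_sub_cancel, Nat.cast_add, Nat.cast_one]
    linarith [hA_le m]
  · simp only [Nat.add_sub_cancel, Nat.cast_add, Nat.cast_one]
    linarith [le_hA m]
  · simp only [tsub_self, range_zero, sum_empty, add_zero, add_sub_cancel, le_add_iff_nonneg_right]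
    exact hc
  · simp [sum_range_succ]
  · simp
  · simp [sum_range_succ]

lemma forall_int_gt_iff_forall_nat {θ : ℤ} {e : ℤ → ℝ} {ρ : ℕ → ℝ} :
    (∀ n : ℤ, θ < n → e n = ρ ((n - θ).toNat + 1) - ρ ((n - θ).toNat)) ↔
      ∀ k : ℕ, e (θ + (k + 1)) = ρ (k + 2) - ρ (k + 1) := by
  refine ⟨fun h k => ?_, fun h n hn => ?_⟩
  · simpa [show (θ + (k + 1) - θ).toNat = k + 1 by omega] using h (θ + (k + 1)) (by omega)
  · obtain ⟨k, rfl⟩ : ∃ k : ℕ, n = θ + (k + 1) := ⟨(n - θ - 1).toNat, by omega⟩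
    simpa [show (θ + (k + 1) - θ).toNat = k + 1 by omega] using h k

lemma forall_int_lt_iff_forall_nat {θ : ℤ} {e : ℤ → ℝ} {η : ℕ → ℝ} :
    (∀ n : ℤ, n < θ → e n = η ((θ - n).toNat + 1) - η ((θ - n).toNat)) ↔
      ∀ k : ℕ, e (θ - (k + 1)) = η (k + 2) - η (k + 1) := by
  refine ⟨fun h k => ?_, fun h n hn => ?_⟩
  · simpa [show (θ - (θ - (k + 1))).toNat = k + 1 by omega] using h (θ - (k + 1)) (by omega)
  · obtain ⟨k, rfl⟩ : ∃ k : ℕ, n = θ - (k + 1) := ⟨(θ - n - 1).toNat, by omega⟩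
    simpa [show (θ - (θ - (k + 1))).toNat = k + 1 by omega] using h k

/-- **polar of `𝒟_θ`.** `E : ℤ → [0,∞)` is an e-value for `𝒟_θ` iff there
exist nondecreasing real sequences `(ρ_n)_{n≥1}`, `(η_n)_{n≥1}` with `ρ_n ≤ n`, `η_n ≤ n`
for all `n ≥ 1` and `ρ_1 + η_1 ≥ 1`, such that `E(n) = ρ_{n−θ+1} − ρ_{n−θ}` for `n > θ`,
`E(θ) = ρ_1 + η_1 − 1`, and `E(n) = η_{θ−n+1} − η_{θ−n}` for `n < θ`. -/
theorem stmt4 (θ : ℤ) (E : ℤ → NNReal) :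
    (∀ P ∈ UnimodalClass θ, ∑' n : ℤ, (E n : ℝ≥0∞) * P {n} ≤ 1) ↔
      ∃ ρ η : ℕ → ℝ,
        (∀ n : ℕ, 1 ≤ n → ρ n ≤ ρ (n + 1)) ∧ (∀ n : ℕ, 1 ≤ n → η n ≤ η (n + 1)) ∧
        (∀ n : ℕ, 1 ≤ n → ρ n ≤ n) ∧ (∀ n : ℕ, 1 ≤ n → η n ≤ n) ∧
        1 ≤ ρ 1 + η 1 ∧
        (∀ n : ℤ, θ < n → (E n : ℝ) = ρ ((n - θ).toNat + 1) - ρ ((n - θ).toNat)) ∧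
        (E θ : ℝ) = ρ 1 + η 1 - 1 ∧
        (∀ n : ℤ, n < θ → (E n : ℝ) = η ((θ - n).toNat + 1) - η ((θ - n).toNat)) := by
  simp only [forall_int_gt_iff_forall_nat, forall_int_lt_iff_forall_nat]
  constructor
  · intro hE
    exact exists_increments_of_partial_sums_le (E θ).coe_nonneg (fun _ => (E _).coe_nonneg)
      (fun _ => (E _).coe_nonneg)
      (fun a b => by simpa only [sum_window] using sum_window_le_of_isEValue hE a b)
  · rintro ⟨ρ, η, -, -, hρ, hη, -, hright, hθ, hleft⟩ P hP
    exact tsum_mul_le_one_of_mem_unimodalClass hρ hη hright hθ hleft hP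
end

section
/- Fix θ ∈ ℤ. Let P be a measure on ℤ. Then ∑_n E(n) f_P(n) ≤ 1 holds for every e-value E for 𝒟_θ if and only if P is a subprobability measure (P(ℤ) ≤ 1) and there exists a probability measure P′ ∈ 𝒟_θ with f_P(n) ≤ f_{P′}(n) for all n ∈ ℤ. Consequently, a probability measure Q on ℤ satisfies ∑_n E(n) f_Q(n) ≤ 1 for every e-value E for 𝒟_θ if and only if Q ∈ 𝒟_θ. -/
open MeasureTheory ENNReal

/-- An e-value for `𝒟_θ`. -/
def IsEValueD (θ : ℤ) (E : ℤ → NNReal) : Prop :=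
  ∀ P ∈ UnimodalClass θ, ∑' n : ℤ, (E n : ℝ≥0∞) * P {n} ≤ 1

/-!
Let `P` be a subprobability on `ℤ`, and let `σ n` maximize `k ↦ P {k}` over the integers `k` with
`n` between `k` and `θ` (so over all of `ℤ` when `n = θ`). Then `P {n} ≤ P {σ n}`, the masses
`P {σ n}` are θ-unimodal, and, since `σ` moves every point away from `θ`, `g ∘ σ ≤ g` for every
θ-unimodal `g`. Hence the fibre sizes `E m = #σ⁻¹{m}` form an e-value, with
`∑ E(m) P {m} = ∑ P {σ n}`. If `P` passes this e-value, adding the missing mass to `P ∘ σ` at `θ`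
gives a θ-unimodal probability dominating `P`. A probability measure dominated by another one is
equal to it, which gives the second part.
-/

open Set
open scoped NNReal

theorem ENNReal.exists_isMaxOn_of_tsum_ne_top {ι : Type*} {f : ι → ℝ≥0∞} (hf : ∑' i, f i ≠ ∞)
    {s : Set ι} (hs : s.Nonempty) : ∃ m ∈ s, IsMaxOn f s m := by
  obtain ⟨a, ha⟩ := hs
  by_cases h : ∃ b ∈ s, f a < f b
  swap
  · push Not at h
    exact ⟨a, ha, h⟩
  obtain ⟨b, hb, hab⟩ := h
  have hfin : (s ∩ {i | f b ≤ f i}).Finite :=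
    (ENNReal.finite_const_le_of_tsum_ne_top hf (ne_bot_of_gt hab)).inter_of_right s
  obtain ⟨m, ⟨hms, hbm⟩, hmax⟩ := exists_max_image _ f hfin ⟨b, hb, le_refl (f b)⟩
  refine ⟨m, hms, fun i hi => ?_⟩
  rcases le_total (f b) (f i) with hbi | hib
  · exact hmax i ⟨hi, hbi⟩
  · exact hib.trans hbm

theorem ENNReal.tsum_ncard_fiber_mul {α β : Type*} {σ : α → β} (hσ : ∀ b, (σ ⁻¹' {b}).Finite)
    (g : β → ℝ≥0∞) : ∑' b, ((σ ⁻¹' {b}).ncard : ℝ≥0∞) * g b = ∑' a, g (σ a) := by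
  rw [← (Equiv.sigmaFiberEquiv σ).tsum_eq, ENNReal.tsum_sigma']
  refine tsum_congr fun b => ?_
  calc ((σ ⁻¹' {b}).ncard : ℝ≥0∞) * g b = ∑' _ : σ ⁻¹' {b}, g b := by
        rw [ENNReal.tsum_set_const, ← (hσ b).cast_ncard_eq]; simp
    _ = _ := tsum_congr fun a => congrArg g a.2.symm

namespace MeasureTheory

variable {α : Type*} [MeasurableSpace α] [Countable α] [MeasurableSingletonClass α]

theorem measure_univ_eq_tsum_singleton (μ : Measure α) : μ univ = ∑' a, μ {a} := by
  simpa using (Measure.tsum_indicator_apply_singleton μ univ MeasurableSet.univ).symm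

theorem Measure.le_of_forall_singleton_le {μ ν : Measure α} (h : ∀ a, μ {a} ≤ ν {a}) : μ ≤ ν :=
  le_intro fun s hs _ => by
    rw [← tsum_indicator_apply_singleton μ s hs, ← tsum_indicator_apply_singleton ν s hs]
    exact ENNReal.tsum_le_tsum fun a => indicator_le_indicator (h a)

end MeasureTheory

def IsUnimodalAt {α : Type*} [Preorder α] (θ : ℤ) (g : ℤ → α) : Prop :=
  (∀ n ≤ θ, g (n - 1) ≤ g n) ∧ ∀ n, θ ≤ n → g (n + 1) ≤ g n

namespace IsUnimodalAt

section Preorder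

variable {α : Type*} [Preorder α] {θ : ℤ} {g : ℤ → α}

theorem monotoneOn (hg : IsUnimodalAt θ g) : MonotoneOn g (Iic θ) :=
  monotoneOn_of_pred_le ordConnected_Iic fun n _ hn _ => by
    simpa [Order.pred_eq_sub_one] using hg.1 n hn

theorem antitoneOn (hg : IsUnimodalAt θ g) : AntitoneOn g (Ici θ) :=
  antitoneOn_of_succ_le ordConnected_Ici fun n _ hn _ => by
    simpa [Order.succ_eq_add_one] using hg.2 n hn

theorem le_of_mem_uIcc (hg : IsUnimodalAt θ g) {m n : ℤ} (h : n ∈ uIcc m θ) : g m ≤ g n := by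
  rcases mem_uIcc.1 h with ⟨hmn, hnθ⟩ | ⟨hθn, hnm⟩
  · exact hg.monotoneOn (mem_Iic.2 (hmn.trans hnθ)) hnθ hmn
  · exact hg.antitoneOn hθn (mem_Ici.2 (hθn.trans hnm)) hnm

end Preorder

theorem add_single {α : Type*} [AddCommMonoid α] [PartialOrder α] [CanonicallyOrderedAdd α]
    {θ : ℤ} {u : ℤ → α} (hu : IsUnimodalAt θ u) (c : α) :
    IsUnimodalAt θ (u + Pi.single θ c) := by
  constructor
  · intro n hn
    simpa [Pi.single_eq_of_ne (show n - 1 ≠ θ by omega)] using (hu.1 n hn).trans le_self_add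
  · intro n hn
    simpa [Pi.single_eq_of_ne (show n + 1 ≠ θ by omega)] using (hu.2 n hn).trans le_self_add

end IsUnimodalAt

theorem exists_isUnimodalAt_comp_of_tsum_ne_top (θ : ℤ) {f : ℤ → ℝ≥0∞} (hf : ∑' n, f n ≠ ∞) :
    ∃ σ : ℤ → ℤ, (∀ n, f n ≤ f (σ n)) ∧ IsUnimodalAt θ (f ∘ σ) ∧ ∀ n, n ∈ uIcc (σ n) θ := by
  have : ∀ n, ∃ m ∈ {k | n ∈ uIcc k θ}, IsMaxOn f {k | n ∈ uIcc k θ} m :=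
    fun n => ENNReal.exists_isMaxOn_of_tsum_ne_top hf ⟨n, left_mem_uIcc⟩
  choose σ hσθ hσmax using this
  refine ⟨σ, fun n => hσmax n left_mem_uIcc,
    ⟨fun n hn => hσmax n ?_, fun n hn => hσmax n ?_⟩, hσθ⟩
  · have := hσθ (n - 1)
    simp only [mem_ofPred_eq, mem_uIcc] at this ⊢
    omega
  · have := hσθ (n + 1)
    simp only [mem_ofPred_eq, mem_uIcc] at this ⊢
    omega

theorem finite_preimage_singleton_of_mem_uIcc {θ : ℤ} {σ : ℤ → ℤ}
    (hσ : ∀ n, n ∈ uIcc (σ n) θ) (m : ℤ) : (σ ⁻¹' {m}).Finite :=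
  (finite_uIcc m θ).subset fun n (hn : σ n = m) => hn ▸ hσ n

theorem mem_unimodalClass_iff {θ : ℤ} {P : Measure ℤ} :
    P ∈ UnimodalClass θ ↔ IsProbabilityMeasure P ∧ IsUnimodalAt θ fun n => P {n} :=
  Iff.rfl

theorem exists_mem_unimodalClass_le {θ : ℤ} {u : ℤ → ℝ≥0∞} (hu : IsUnimodalAt θ u)
    (hu₁ : ∑' n, u n ≤ 1) : ∃ P ∈ UnimodalClass θ, ∀ n, u n ≤ P {n} := by
  set v := u + Pi.single θ (1 - ∑' n, u n)
  have hv : HasSum v 1 :=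
    add_tsub_cancel_of_le hu₁ ▸ ENNReal.summable.hasSum.add (hasSum_pi_single θ _)
  let p : PMF ℤ := ⟨v, hv⟩
  have hp : ∀ n, p.toMeasure {n} = v n := fun n =>
    p.toMeasure_apply_singleton n (measurableSet_singleton n)
  refine ⟨p.toMeasure, mem_unimodalClass_iff.2 ⟨PMF.toMeasure.isProbabilityMeasure p, ?_⟩,
    fun n => ?_⟩
  · simpa only [hp] using hu.add_single _
  · rw [hp]
    exact le_self_add

theorem isEValueD_one (θ : ℤ) : IsEValueD θ 1 := fun P hP => by
  have := hP.1
  simp [← measure_univ_eq_tsum_singleton]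

theorem isEValueD_ncard_fiber {θ : ℤ} {σ : ℤ → ℤ} (hσ : ∀ n, n ∈ uIcc (σ n) θ) :
    IsEValueD θ fun m => ((σ ⁻¹' {m}).ncard : ℝ≥0) := fun P hP => by
  obtain ⟨hP₁, hPu⟩ := mem_unimodalClass_iff.1 hP
  calc ∑' m, (((σ ⁻¹' {m}).ncard : ℝ≥0) : ℝ≥0∞) * P {m} = ∑' n, P {σ n} := by
        simpa only [ENNReal.coe_natCast] using
          ENNReal.tsum_ncard_fiber_mul (finite_preimage_singleton_of_mem_uIcc hσ) fun m => P {m}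
    _ ≤ ∑' n, P {n} := ENNReal.tsum_le_tsum fun n => hPu.le_of_mem_uIcc (hσ n)
    _ = 1 := by rw [← measure_univ_eq_tsum_singleton, measure_univ]

theorem exists_mem_unimodalClass_le_of_forall_isEValueD {θ : ℤ} {P : Measure ℤ}
    (hP : ∀ E, IsEValueD θ E → ∑' n, (E n : ℝ≥0∞) * P {n} ≤ 1) :
    ∃ P' ∈ UnimodalClass θ, ∀ n, P {n} ≤ P' {n} := by
  have hfin : ∑' n, P {n} ≠ ∞ :=
    ne_top_of_le_ne_top one_ne_top (by simpa using hP 1 (isEValueD_one θ))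
  obtain ⟨σ, hle, hσu, hσθ⟩ := exists_isUnimodalAt_comp_of_tsum_ne_top θ hfin
  have hσ₁ : ∑' n, P {σ n} ≤ 1 := by
    simpa only [ENNReal.coe_natCast,
      ENNReal.tsum_ncard_fiber_mul (finite_preimage_singleton_of_mem_uIcc hσθ)]
      using hP _ (isEValueD_ncard_fiber hσθ)
  obtain ⟨P', hP', hdom⟩ := exists_mem_unimodalClass_le hσu hσ₁
  exact ⟨P', hP', fun n => (hle n).trans (hdom n)⟩

theorem forall_isEValueD_tsum_le_one_iff (θ : ℤ) (P : Measure ℤ) :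
    (∀ E, IsEValueD θ E → ∑' n, (E n : ℝ≥0∞) * P {n} ≤ 1) ↔
      P univ ≤ 1 ∧ ∃ P' ∈ UnimodalClass θ, ∀ n, P {n} ≤ P' {n} := by
  refine ⟨fun hP => ⟨?_, exists_mem_unimodalClass_le_of_forall_isEValueD hP⟩, ?_⟩
  · simpa [measure_univ_eq_tsum_singleton] using hP 1 (isEValueD_one θ)
  · rintro ⟨-, P', hP', hle⟩ E hE
    exact (ENNReal.tsum_le_tsum fun n => mul_le_mul_right (hle n) _).trans (hE P' hP')

/-- **bipolar of `𝒟_θ`; strong testability of θ-unimodality.**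
A measure `P` on `ℤ` satisfies `∑ₙ E(n) f_P(n) ≤ 1` for every e-value `E` for `𝒟_θ` iff
`P` is a subprobability dominated pointwise by some θ-unimodal probability.
Consequently a probability measure `Q` satisfies this for every e-value iff `Q ∈ 𝒟_θ`. -/
theorem stmt5 (θ : ℤ) :
    (∀ P : Measure ℤ,
      ((∀ E : ℤ → NNReal, IsEValueD θ E → ∑' n : ℤ, (E n : ℝ≥0∞) * P {n} ≤ 1) ↔
        (P Set.univ ≤ 1 ∧ ∃ P' ∈ UnimodalClass θ, ∀ n : ℤ, P {n} ≤ P' {n}))) ∧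
    (∀ Q : Measure ℤ, IsProbabilityMeasure Q →
      ((∀ E : ℤ → NNReal, IsEValueD θ E → ∑' n : ℤ, (E n : ℝ≥0∞) * Q {n} ≤ 1) ↔
        Q ∈ UnimodalClass θ)) := by
  refine ⟨forall_isEValueD_tsum_le_one_iff θ, fun Q hQ => ⟨fun hQE => ?_, fun hQ' E hE => hE Q hQ'⟩⟩
  obtain ⟨-, P', hP', hle⟩ := (forall_isEValueD_tsum_le_one_iff θ Q).1 hQE
  have := hP'.1
  rwa [Measure.eq_of_le_of_isProbabilityMeasure (Measure.le_of_forall_singleton_le hle)]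
end

section
/- Let q : [0,∞) → [0,∞) be a left-continuous function with ∫_0^∞ q(t) dt = 1 (a probability density) such that sup_{x ≥ 0} (x+1)·q(x) < ∞. Then for every P ∈ 𝒱, ∫ x·q(x) dP(x) ≤ 1; that is, the function x ↦ x·q(x) is an e-value for 𝒱, and consequently for every Borel probability measure on ℝ concentrated on [0,∞) whose CDF is concave on [0,∞). -/
open MeasureTheory Set Filter

/-- `𝒰₀⁺`: Borel probability measures on `ℝ` concentrated on `[0,∞)` whose CDF is concave
on `[0,∞)`. -/
def U0plus : Set (Measure ℝ) :=
  {P | IsProbabilityMeasure P ∧ P (Ici (0 : ℝ)) = 1 ∧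
    ConcaveOn ℝ (Ici (0 : ℝ)) (fun x => (P (Iic x)).toReal)}

/-- `𝒱`: Borel probability measures on `ℝ` concentrated on `[0,∞)` satisfying the basic
inequality `P((a,b]) ≤ (b−a)/b` for all `0 ≤ a < b`. -/
def Vclass : Set (Measure ℝ) :=
  {P | IsProbabilityMeasure P ∧ P (Ici (0 : ℝ)) = 1 ∧
    ∀ a b : ℝ, 0 ≤ a → a < b → P (Ioc a b) ≤ ENNReal.ofReal ((b - a) / b)}

/-!
For `0 < a < b` the defining inequality of `𝒱` gives `P [a, b] ≤ (b - a) / b ≤ ∫ₐᵇ dt / t`, so a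
Besicovitch covering argument shows that every `P ∈ 𝒱` is dominated on `(0, ∞)` by the measure
`dt / t`. Against that measure `x q(x)` integrates to `∫₀^∞ q = 1`. A CDF `F` concave on `[0, ∞)`
satisfies `F a ≥ (a / b) F b`, which is the inequality defining `𝒱`.
-/

open scoped Topology

section Vclass

variable {P : Measure ℝ}

lemma measure_Icc_le_of_measure_Ioc_le
    (hV : ∀ a b : ℝ, 0 ≤ a → a < b → P (Ioc a b) ≤ ENNReal.ofReal ((b - a) / b))
    {a b : ℝ} (ha : 0 < a) (hab : a ≤ b) :
    P (Icc a b) ≤ ENNReal.ofReal ((b - a) / b) := by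
  have hlim : Tendsto (fun δ : ℝ => ENNReal.ofReal ((b - (a - δ)) / b)) (𝓝[>] 0)
      (𝓝 (ENNReal.ofReal ((b - a) / b))) := by
    have : Continuous fun δ : ℝ => ENNReal.ofReal ((b - (a - δ)) / b) :=
      ENNReal.continuous_ofReal.comp (by fun_prop)
    simpa using (this.tendsto 0).mono_left nhdsWithin_le_nhds
  refine ge_of_tendsto hlim ?_
  filter_upwards [Ioo_mem_nhdsGT ha] with δ hδ
  calc P (Icc a b) ≤ P (Ioc (a - δ) b) :=
        measure_mono fun x hx => ⟨by linarith [hx.1, hδ.1], hx.2⟩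
    _ ≤ _ := hV _ _ (by linarith [hδ.2]) (by linarith [hδ.1])

lemma ofReal_sub_div_le_withDensity_max_inv_Icc {a b c : ℝ} (hc : 0 < c) (hcb : c ≤ b) :
    ENNReal.ofReal ((b - a) / b) ≤
      volume.withDensity (fun t => ENNReal.ofReal (max t c)⁻¹) (Icc a b) := by
  have hb : 0 < b := hc.trans_le hcb
  rw [withDensity_apply _ measurableSet_Icc]
  calc ENNReal.ofReal ((b - a) / b) = ∫⁻ _ in Icc a b, ENNReal.ofReal b⁻¹ := by
        rw [setLIntegral_const, Real.volume_Icc, ← ENNReal.ofReal_mul (inv_nonneg.2 hb.le),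
          inv_mul_eq_div]
    _ ≤ ∫⁻ t in Icc a b, ENNReal.ofReal (max t c)⁻¹ :=
        setLIntegral_mono (by fun_prop) fun t ht => ENNReal.ofReal_le_ofReal
          (inv_anti₀ (hc.trans_le (le_max_right t c)) (max_le ht.2 hcb))

lemma measure_le_withDensity_max_inv [SFinite P]
    (hV : ∀ a b : ℝ, 0 ≤ a → a < b → P (Ioc a b) ≤ ENNReal.ofReal ((b - a) / b))
    {c : ℝ} (hc : 0 < c) {s : Set ℝ} (hs : s ⊆ Ici c) :
    P s ≤ volume.withDensity (fun t => ENNReal.ofReal (max t c)⁻¹) s := by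
  -- the cutoff at `c` makes the comparison measure locally finite, as the covering lemma needs
  have : IsLocallyFiniteMeasure (volume.withDensity fun t => ENNReal.ofReal (max t c)⁻¹) :=
    .withDensity_ofReal <| (continuous_id.max continuous_const).inv₀ fun t =>
      (hc.trans_le (le_max_right t c)).ne'
  refine (Besicovitch.vitaliFamily P).measure_le_of_frequently_le _
    Measure.AbsolutelyContinuous.rfl s fun x hx => ?_
  have hcx : c ≤ x := hs hx
  refine (Besicovitch.tendsto_filterAt P x).frequently (Eventually.frequently ?_)
  filter_upwards [Ioo_mem_nhdsGT (hc.trans_le hcx)] with r hr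
  rw [Real.closedBall_eq_Icc]
  exact (measure_Icc_le_of_measure_Ioc_le hV (sub_pos.2 hr.2) (by linarith [hr.1])).trans
    (ofReal_sub_div_le_withDensity_max_inv_Icc hc (by linarith [hr.1]))

lemma restrict_Ioi_le_withDensity_inv [SFinite P]
    (hV : ∀ a b : ℝ, 0 ≤ a → a < b → P (Ioc a b) ≤ ENNReal.ofReal ((b - a) / b)) :
    P.restrict (Ioi 0) ≤ volume.withDensity (fun t => ENNReal.ofReal t⁻¹) := by
  refine Measure.le_iff.2 fun s hs => ?_
  rw [Measure.restrict_apply hs]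
  set ν := volume.withDensity (fun t : ℝ => ENNReal.ofReal t⁻¹)
  have hcut (n : ℕ) : P (s ∩ Ici (1 / (n + 1))) ≤ ν s := by
    have hc : (0 : ℝ) < 1 / (n + 1) := by positivity
    have hsc := hs.inter (measurableSet_Ici (a := 1 / ((n : ℝ) + 1)))
    calc P (s ∩ Ici (1 / (n + 1)))
        ≤ volume.withDensity (fun t => ENNReal.ofReal (max t (1 / (n + 1)))⁻¹)
            (s ∩ Ici (1 / (n + 1))) := measure_le_withDensity_max_inv hV hc inter_subset_right
      _ = ν (s ∩ Ici (1 / (n + 1))) := by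
        rw [withDensity_apply _ hsc, withDensity_apply _ hsc]
        exact setLIntegral_congr_fun hsc fun t ht => by rw [max_eq_left ht.2]
      _ ≤ ν s := measure_mono inter_subset_left
  have hunion : s ∩ Ioi 0 = ⋃ n : ℕ, s ∩ Ici (1 / ((n : ℝ) + 1)) := by
    ext x
    simp only [mem_inter_iff, mem_Ioi, mem_iUnion, mem_Ici]
    refine ⟨fun ⟨hxs, hx⟩ => ?_, fun ⟨n, hxs, hn⟩ => ⟨hxs, lt_of_lt_of_le (by positivity) hn⟩⟩
    obtain ⟨n, hn⟩ := exists_nat_one_div_lt hx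
    exact ⟨n, hxs, hn.le⟩
  have hmono : Monotone fun n : ℕ => s ∩ Ici (1 / ((n : ℝ) + 1)) := fun m n hmn =>
    inter_subset_inter_right _ (Ici_subset_Ici.2 (Nat.one_div_le_one_div hmn))
  rw [hunion]
  exact le_of_tendsto' (tendsto_measure_iUnion_atTop hmono) hcut

end Vclass

lemma lintegral_ofReal_mul_le_of_mem_Vclass {P : Measure ℝ} (hP : P ∈ Vclass) (q : ℝ → ℝ) :
    ∫⁻ x, ENNReal.ofReal (x * q x) ∂P ≤ ∫⁻ x in Ioi 0, ENNReal.ofReal (q x) := by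
  obtain ⟨_, hIci, hV⟩ := hP
  have hnonneg : ∀ᵐ x ∂P, 0 ≤ x :=
    mem_ae_iff.2 ((prob_compl_eq_zero_iff measurableSet_Ici).2 hIci)
  have hnonpos : ∫⁻ x in Iic 0, ENNReal.ofReal (x * q x) ∂P = 0 := by
    refine (lintegral_congr_ae ?_).trans lintegral_zero
    refine (ae_restrict_iff' measurableSet_Iic).2 (hnonneg.mono fun x hx0 hx => ?_)
    simp [le_antisymm hx hx0]
  calc ∫⁻ x, ENNReal.ofReal (x * q x) ∂P
      = ∫⁻ x in Ioi 0, ENNReal.ofReal (x * q x) ∂P := by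
        rw [← lintegral_add_compl _ measurableSet_Ioi, compl_Ioi, hnonpos, add_zero]
    _ ≤ ∫⁻ x, ENNReal.ofReal (x * q x) ∂volume.withDensity (fun t => ENNReal.ofReal t⁻¹) :=
        lintegral_mono' (restrict_Ioi_le_withDensity_inv hV) le_rfl
    _ ≤ ∫⁻ x, ENNReal.ofReal x⁻¹ * ENNReal.ofReal (x * q x) :=
        lintegral_withDensity_le_lintegral_mul _ measurable_inv.ennreal_ofReal _
    _ ≤ ∫⁻ x, (Ioi 0).indicator (fun x => ENNReal.ofReal (q x)) x := by
        refine lintegral_mono fun x => ?_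
        rcases lt_or_ge 0 x with hx | hx
        · rw [indicator_of_mem (mem_Ioi.2 hx), ← ENNReal.ofReal_mul (inv_nonneg.2 hx.le),
            inv_mul_cancel_left₀ hx.ne']
        · rw [ENNReal.ofReal_of_nonpos (inv_nonpos.2 hx), zero_mul]
          exact bot_le
    _ = ∫⁻ x in Ioi 0, ENNReal.ofReal (q x) := lintegral_indicator measurableSet_Ioi _

lemma U0plus_subset_Vclass : U0plus ⊆ Vclass := by
  rintro P ⟨hprob, hIci, hconc⟩
  refine ⟨hprob, hIci, fun a b ha hab => ?_⟩
  have hb : 0 < b := ha.trans_lt hab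
  set F := fun x => (P (Iic x)).toReal
  have hF0 : 0 ≤ F 0 := ENNReal.toReal_nonneg
  have hFb : F b ≤ 1 := measureReal_le_one
  -- concavity on `[0, b]` at `a = (1 - a/b) • 0 + (a/b) • b`
  have hFa : (1 - a / b) * F 0 + a / b * F b ≤ F a := by
    have h := hconc.2 (mem_Ici.2 le_rfl) (mem_Ici.2 hb.le)
      (sub_nonneg.2 ((div_le_one hb).2 hab.le)) (div_nonneg ha hb.le) (by ring)
    simpa only [smul_eq_mul, mul_zero, zero_add, div_mul_cancel₀ a hb.ne'] using h
  rw [← Iic_sdiff_Iic, ← ofReal_measureReal, measureReal_sdiff (Iic_subset_Iic.2 hab.le)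
    measurableSet_Iic]
  refine ENNReal.ofReal_le_ofReal ?_
  have hab' : (b - a) / b = 1 - a / b := by field_simp
  change F b - F a ≤ (b - a) / b
  rw [hab']
  nlinarith [div_nonneg ha hb.le, (div_le_one hb).2 hab.le]

theorem stmt7_general (q : ℝ → ℝ) (hq0 : ∀ x : ℝ, 0 ≤ x → 0 ≤ q x)
    (hint : ∫ t in Ioi (0 : ℝ), q t = 1) :
    (∀ P ∈ Vclass, ∫⁻ x : ℝ, ENNReal.ofReal (x * q x) ∂P ≤ 1) ∧
    (∀ P ∈ U0plus, ∫⁻ x : ℝ, ENNReal.ofReal (x * q x) ∂P ≤ 1) := by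
  have hq : ∫⁻ t in Ioi (0 : ℝ), ENNReal.ofReal (q t) = 1 := by
    rw [← ofReal_integral_eq_lintegral_ofReal (integrable_of_integral_eq_one hint)
      ((ae_restrict_iff' measurableSet_Ioi).2 (ae_of_all _ fun x hx => hq0 x (le_of_lt hx))),
      hint, ENNReal.ofReal_one]
  have hV (P) (hP : P ∈ Vclass) : ∫⁻ x : ℝ, ENNReal.ofReal (x * q x) ∂P ≤ 1 :=
    (lintegral_ofReal_mul_le_of_mem_Vclass hP q).trans hq.le
  exact ⟨hV, fun P hP => hV P (U0plus_subset_Vclass hP)⟩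

/-- **the `Xq(X)` e-values, continuous case.** Let `q : [0,∞) → [0,∞)` be
a left-continuous probability density with `(x+1)·q(x)` bounded. Then `x ↦ x·q(x)` is an
e-value for `𝒱`, and consequently for every probability measure on `ℝ` concentrated on
`[0,∞)` with concave CDF on `[0,∞)`. -/
theorem stmt7 (q : ℝ → ℝ) (hmeas : Measurable q) (hq0 : ∀ x : ℝ, 0 ≤ x → 0 ≤ q x)
    (hlc : ∀ x : ℝ, 0 < x → Tendsto q (nhdsWithin x (Iio x)) (nhds (q x)))
    (hint : ∫ t in Ioi (0 : ℝ), q t = 1)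
    (hbdd : ∃ C : ℝ, ∀ x : ℝ, 0 ≤ x → (x + 1) * q x ≤ C) :
    (∀ P ∈ Vclass, ∫⁻ x : ℝ, ENNReal.ofReal (x * q x) ∂P ≤ 1) ∧
    (∀ P ∈ U0plus, ∫⁻ x : ℝ, ENNReal.ofReal (x * q x) ∂P ≤ 1) :=
  stmt7_general q hq0 hint
end

section
/- Let E : [0,∞) → [0,∞) be Borel measurable. Then: (i) ∫ E dP ≤ 1 holds for every P ∈ 𝒰₀₀⁺ if and only if ∫_0^x E(t) dt ≤ x for every x > 0; (ii) ∫ E dP ≤ 1 holds for every P ∈ 𝒰₀⁺ if and only if ∫_0^x E(t) dt ≤ x for every x > 0 and E(0) ≤ 1. In other words, these two conditions characterize exactly all e-values for jumpless continuous monotonicity and for continuous monotonicity with a possible atom at 0, respectively. -/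
open MeasureTheory Set

/-- `𝒰₀₀⁺`: the jumpless continuous monotone class, i.e. members of `𝒰₀⁺` with no atom
at `0`. -/
def U00plus : Set (Measure ℝ) :=
  {P | P ∈ U0plus ∧ P {(0 : ℝ)} = 0}

/-!
On `(0, ∞)` a concave CDF `F` is absolutely continuous, with density its right derivative
`F'₊`, which is nonincreasing. By the layer-cake formula
`∫_{(0,∞)} E F'₊ = ∫₀^∞ (∫_{F'₊ > s} E) ds`, and each superlevel set `{F'₊ > s}` is an initial
segment of `(0, ∞)`, over which `∫ E` is at most its length; integrating back in `s` gives
`∫_{(0,∞)} E dP ≤ P (0, ∞)`, while the atom at `0` contributes `E 0 · P {0}`. Conversely, the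
uniform laws on `(0, x]` and the Dirac mass at `0` belong to the classes and turn
`∫ E dP ≤ 1` into the stated conditions.
-/

open scoped ENNReal ProbabilityTheory

namespace ConcaveOn

variable {S : Set ℝ} {f : ℝ → ℝ}

lemma antitoneOn_rightDeriv (hf : ConcaveOn ℝ S f) :
    AntitoneOn (fun x ↦ derivWithin f (Ioi x) x) (interior S) := by
  intro x hx y hy hxy
  simpa [derivWithin.neg] using hf.neg.monotoneOn_rightDeriv hx hy hxy

lemma hasDerivWithinAt_rightDeriv_of_mem_interior (hf : ConcaveOn ℝ S f) {x : ℝ}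
    (hx : x ∈ interior S) : HasDerivWithinAt f (derivWithin f (Ioi x) x) (Ioi x) x := by
  simpa using (hf.neg.differentiableWithinAt_Ioi_of_mem_interior hx).neg.hasDerivWithinAt

lemma intervalIntegrable_rightDeriv (hf : ConcaveOn ℝ S f) {a b : ℝ}
    (hS : uIcc a b ⊆ interior S) :
    IntervalIntegrable (fun x ↦ derivWithin f (Ioi x) x) volume a b :=
  (hf.antitoneOn_rightDeriv.mono hS).intervalIntegrable

lemma integral_rightDeriv_eq_sub (hf : ConcaveOn ℝ S f) {a b : ℝ} (hab : a ≤ b)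
    (hS : Icc a b ⊆ interior S) :
    ∫ x in a..b, derivWithin f (Ioi x) x = f b - f a :=
  intervalIntegral.integral_eq_sub_of_hasDeriv_right_of_le hab
    (hf.continuousOn_interior.mono hS)
    (fun _ hx ↦ hf.hasDerivWithinAt_rightDeriv_of_mem_interior (hS (Ioo_subset_Icc_self hx)))
    (hf.intervalIntegrable_rightDeriv (by rwa [uIcc_of_le hab]))

end ConcaveOn

lemma setLIntegral_le_volume_of_Ioc_subset {e : ℝ → ℝ≥0∞}
    (he : ∀ x, 0 < x → ∫⁻ t in Ioc 0 x, e t ≤ ENNReal.ofReal x) {s : Set ℝ} (hs : s ⊆ Ioi 0)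
    (hseg : ∀ x ∈ s, Ioc 0 x ⊆ s) : ∫⁻ t in s, e t ≤ volume s := by
  rcases s.eq_empty_or_nonempty with rfl | ⟨x₀, hx₀⟩
  · simp
  by_cases hbdd : BddAbove s
  · have ha : 0 < sSup s := (hs hx₀).trans_le (le_csSup hbdd hx₀)
    calc ∫⁻ t in s, e t ≤ ∫⁻ t in Ioc 0 (sSup s), e t :=
          lintegral_mono_set fun x hx ↦ ⟨hs hx, le_csSup hbdd hx⟩
      _ ≤ volume (Ioo 0 (sSup s)) := by simpa using he _ ha
      _ ≤ volume s := measure_mono fun y hy ↦ by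
          obtain ⟨x, hx, hyx⟩ := exists_lt_of_lt_csSup ⟨x₀, hx₀⟩ hy.2
          exact hseg x hx ⟨hy.1, hyx.le⟩
  · have hsub : Ioi 0 ⊆ s := fun y hy ↦ by
      obtain ⟨x, hx, hyx⟩ := not_bddAbove_iff.mp hbdd y
      exact hseg x hx ⟨hy, hyx.le⟩
    have hs_top : volume s = ∞ := top_unique (by simpa using measure_mono (μ := volume) hsub)
    exact hs_top ▸ le_top

lemma setLIntegral_mul_le_of_antitoneOn {e : ℝ → ℝ≥0∞} (he_meas : Measurable e)
    (he : ∀ x, 0 < x → ∫⁻ t in Ioc 0 x, e t ≤ ENNReal.ofReal x) {w : ℝ → ℝ}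
    (hw_meas : Measurable w) (hw : AntitoneOn w (Ioi 0)) (hw0 : ∀ x ∈ Ioi 0, 0 ≤ w x) :
    ∫⁻ t in Ioi 0, e t * ENNReal.ofReal (w t) ≤ ∫⁻ t in Ioi 0, ENNReal.ofReal (w t) := by
  set μ := (volume.restrict (Ioi (0 : ℝ))).withDensity e
  have hw0' : 0 ≤ᵐ[volume.restrict (Ioi 0)] w := (ae_restrict_mem measurableSet_Ioi).mono hw0
  calc ∫⁻ t in Ioi 0, e t * ENNReal.ofReal (w t) = ∫⁻ t, ENNReal.ofReal (w t) ∂μ := by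
        rw [lintegral_withDensity_eq_lintegral_mul _ he_meas (by fun_prop)]
        rfl
    _ = ∫⁻ s in Ioi 0, μ {t | s < w t} :=
        lintegral_eq_lintegral_meas_lt μ ((withDensity_absolutelyContinuous _ _).ae_le hw0')
          hw_meas.aemeasurable
    _ ≤ ∫⁻ s in Ioi 0, volume.restrict (Ioi 0) {t | s < w t} := lintegral_mono fun s ↦ by
        have hms : MeasurableSet {t | s < w t} := measurableSet_lt measurable_const hw_meas
        rw [withDensity_apply _ hms, Measure.restrict_restrict hms, Measure.restrict_apply hms]
        refine setLIntegral_le_volume_of_Ioc_subset he inter_subset_right ?_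
        rintro x ⟨hx, hx0⟩ y ⟨hy0, hyx⟩
        exact ⟨hx.trans_le (hw hy0 hx0 hyx), hy0⟩
    _ = ∫⁻ t in Ioi 0, ENNReal.ofReal (w t) :=
        (lintegral_eq_lintegral_meas_lt _ hw0' hw_meas.aemeasurable).symm

namespace StieltjesFunction

variable (f : StieltjesFunction ℝ)

lemma measure_Ioc_eq_lintegral_rightDeriv (hf : ConcaveOn ℝ (Ioi 0) f) {a : ℝ} (ha : 0 < a)
    (b : ℝ) : f.measure (Ioc a b) = ∫⁻ x in Ioc a b, ENNReal.ofReal (derivWithin f (Ioi x) x) := by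
  rcases le_or_gt b a with hba | hab
  · simp [Ioc_eq_empty_of_le hba]
  have hS : Icc a b ⊆ interior (Ioi 0) := by
    rw [interior_Ioi]
    exact fun x hx ↦ ha.trans_le hx.1
  rw [f.measure_Ioc, ← hf.integral_rightDeriv_eq_sub hab.le hS,
    intervalIntegral.integral_of_le hab.le, ofReal_integral_eq_lintegral_ofReal]
  · exact (hf.intervalIntegrable_rightDeriv (by rwa [uIcc_of_le hab.le])).1
  · exact Filter.Eventually.of_forall fun x ↦ (f.mono.monotoneOn _).derivWithin_nonneg

lemma measure_restrict_Ioi_eq_withDensity (hf : ConcaveOn ℝ (Ioi 0) f) :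
    f.measure.restrict (Ioi 0) =
      (volume.restrict (Ioi 0)).withDensity fun x ↦ ENNReal.ofReal (derivWithin f (Ioi x) x) := by
  have hU : Ioi (0 : ℝ) = ⋃ n : ℕ, Ioi ((n + 1 : ℝ)⁻¹) := by
    ext x
    simp only [mem_Ioi, mem_iUnion]
    refine ⟨fun hx ↦ ?_, fun ⟨n, hn⟩ ↦ lt_trans (by positivity) hn⟩
    obtain ⟨n, hn⟩ := exists_nat_one_div_lt hx
    exact ⟨n, by simpa using hn⟩
  -- The density may blow up at `0`, so the fundamental theorem of calculus is only
  -- available away from it: compare the restrictions to each `Ioi (n + 1)⁻¹`.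
  rw [← restrict_withDensity _root_.measurableSet_Ioi, hU, Measure.restrict_iUnion_congr]
  intro n
  have hε : (0 : ℝ) < (n + 1 : ℝ)⁻¹ := by positivity
  refine Measure.ext_of_Ioc' _ _ (fun a b _ ↦ ?_) (fun a b _ ↦ ?_)
  · rw [Measure.restrict_apply measurableSet_Ioc, Ioc_inter_Ioi, f.measure_Ioc]
    exact ENNReal.ofReal_ne_top
  · rw [Measure.restrict_apply measurableSet_Ioc, Measure.restrict_apply measurableSet_Ioc,
      Ioc_inter_Ioi, withDensity_apply _ measurableSet_Ioc,
      f.measure_Ioc_eq_lintegral_rightDeriv hf (hε.trans_le le_sup_right)]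

lemma setLIntegral_Ioi_le_measure (hf : ConcaveOn ℝ (Ioi 0) f) {e : ℝ → ℝ≥0∞}
    (he_meas : Measurable e)
    (he : ∀ x, 0 < x → ∫⁻ t in Ioc 0 x, e t ≤ ENNReal.ofReal x) :
    ∫⁻ x in Ioi 0, e x ∂f.measure ≤ f.measure (Ioi 0) := by
  set w : ℝ → ℝ := fun x ↦ derivWithin f (Ioi x) x
  have hw_meas : Measurable w := measurable_derivWithin_Ioi f
  have hdens := f.measure_restrict_Ioi_eq_withDensity hf
  calc ∫⁻ x in Ioi 0, e x ∂f.measure = ∫⁻ x in Ioi 0, e x * ENNReal.ofReal (w x) := by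
        rw [hdens, lintegral_withDensity_eq_lintegral_mul _ (by fun_prop) he_meas]
        exact lintegral_congr fun _ ↦ mul_comm _ _
    _ ≤ ∫⁻ x in Ioi 0, ENNReal.ofReal (w x) :=
        setLIntegral_mul_le_of_antitoneOn he_meas he hw_meas
          (by simpa using hf.antitoneOn_rightDeriv)
          fun x _ ↦ (f.mono.monotoneOn _).derivWithin_nonneg
    _ = f.measure (Ioi 0) := by
        rw [← Measure.restrict_apply_univ, hdens, withDensity_apply _ MeasurableSet.univ,
          Measure.restrict_univ]

end StieltjesFunction

lemma lintegral_le_one_of_mem_U0plus {P : Measure ℝ} (hP : P ∈ U0plus) {e : ℝ → ℝ≥0∞}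
    (he_meas : Measurable e) (he : ∀ x, 0 < x → ∫⁻ t in Ioc 0 x, e t ≤ ENNReal.ofReal x)
    (he0 : e 0 * P {0} ≤ P {0}) : ∫⁻ x, e x ∂P ≤ 1 := by
  obtain ⟨hprob, hP_Ici, hconc⟩ := hP
  have hcdf : ConcaveOn ℝ (Ici 0) (ProbabilityTheory.cdf P) :=
    hconc.congr fun x _ ↦ by simp [ProbabilityTheory.cdf_eq_real, measureReal_def]
  have hsupp : P.restrict (Ici 0) = P :=
    Measure.restrict_eq_self_of_ae_mem ((mem_ae_iff_prob_eq_one measurableSet_Ici).2 hP_Ici)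
  calc ∫⁻ x, e x ∂P = ∫⁻ x in Ioi 0, e x ∂P + e 0 * P {0} := by
        conv_lhs => rw [← hsupp, ← Ioi_union_left]
        rw [lintegral_union (measurableSet_singleton 0) (by simp), lintegral_singleton]
    _ ≤ P (Ioi 0) + P {0} := by
        gcongr
        rw [← ProbabilityTheory.measure_cdf P]
        exact (ProbabilityTheory.cdf P).setLIntegral_Ioi_le_measure
          (hcdf.subset Ioi_subset_Ici_self (convex_Ioi 0)) he_meas he
    _ = 1 := by rw [← hP_Ici, ← Ioi_union_left, measure_union (by simp) (measurableSet_singleton 0)]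

lemma cond_volume_Ioc_mem_U00plus {x : ℝ} (hx : 0 < x) : volume[|Ioc 0 x] ∈ U00plus := by
  have hvol : volume (Ioc 0 x) = ENNReal.ofReal x := by simp
  have : IsProbabilityMeasure volume[|Ioc 0 x] :=
    ProbabilityTheory.cond_isProbabilityMeasure_of_finite (by simpa [hvol]) (by simp [hvol])
  have hcdf : ∀ t ∈ Ici (0 : ℝ), x⁻¹ * min x t = (volume[|Ioc 0 x] (Iic t)).toReal := by
    intro t ht
    rw [ProbabilityTheory.cond_apply measurableSet_Ioc, Ioc_inter_Iic, hvol, Real.volume_Ioc,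
      sub_zero, ENNReal.toReal_mul, ENNReal.toReal_inv, ENNReal.toReal_ofReal hx.le,
      ENNReal.toReal_ofReal (le_min hx.le ht)]
  refine ⟨⟨inferInstance, ?_, ?_⟩, ?_⟩
  · exact (mem_ae_iff_prob_eq_one measurableSet_Ici).1
      ((ProbabilityTheory.ae_cond_mem measurableSet_Ioc).mono fun t ht ↦ ht.1.le)
  · exact (((concaveOn_const x (convex_Ici 0)).inf (concaveOn_id (convex_Ici 0))).smul
      (inv_nonneg.2 hx.le)).congr hcdf
  · exact ProbabilityTheory.cond_absolutelyContinuous Real.volume_singleton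

lemma lintegral_cond_volume_Ioc (x : ℝ) (e : ℝ → ℝ≥0∞) :
    ∫⁻ t, e t ∂volume[|Ioc 0 x] = (ENNReal.ofReal x)⁻¹ * ∫⁻ t in Ioc 0 x, e t := by
  rw [ProbabilityTheory.cond, lintegral_smul_measure, Real.volume_Ioc, sub_zero, smul_eq_mul]

lemma dirac_zero_mem_U0plus : Measure.dirac 0 ∈ U0plus := by
  refine ⟨inferInstance, by simp, (concaveOn_const 1 (convex_Ici 0)).congr fun t ht ↦ ?_⟩
  simp [Measure.dirac_apply_of_mem (show (0 : ℝ) ∈ Iic t from ht)]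

theorem stmt8_general (E : ℝ → ℝ) (hmeas : Measurable E) :
    ((∀ P ∈ U00plus, ∫⁻ x : ℝ, ENNReal.ofReal (E x) ∂P ≤ 1) ↔
      (∀ x : ℝ, 0 < x →
        ∫⁻ t in Ioc (0 : ℝ) x, ENNReal.ofReal (E t) ≤ ENNReal.ofReal x)) ∧
    ((∀ P ∈ U0plus, ∫⁻ x : ℝ, ENNReal.ofReal (E x) ∂P ≤ 1) ↔
      ((∀ x : ℝ, 0 < x →
        ∫⁻ t in Ioc (0 : ℝ) x, ENNReal.ofReal (E t) ≤ ENNReal.ofReal x) ∧ E 0 ≤ 1)) := by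
  have he_meas : Measurable fun x ↦ ENNReal.ofReal (E x) := by fun_prop
  have hunif : ∀ x, 0 < x → ∫⁻ t, ENNReal.ofReal (E t) ∂volume[|Ioc 0 x] ≤ 1 →
      ∫⁻ t in Ioc 0 x, ENNReal.ofReal (E t) ≤ ENNReal.ofReal x := fun x hx h ↦ by
    rwa [lintegral_cond_volume_Ioc, ENNReal.inv_mul_le_iff (by simpa) ENNReal.ofReal_ne_top,
      mul_one] at h
  refine ⟨⟨fun h x hx ↦ hunif x hx (h _ (cond_volume_Ioc_mem_U00plus hx)), ?_⟩,
    ⟨fun h ↦ ⟨fun x hx ↦ hunif x hx (h _ (cond_volume_Ioc_mem_U00plus hx).1), ?_⟩, ?_⟩⟩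
  · rintro hE P ⟨hP, hP0⟩
    exact lintegral_le_one_of_mem_U0plus hP he_meas hE (by simp [hP0])
  · simpa [lintegral_dirac' _ he_meas] using h _ dirac_zero_mem_U0plus
  · rintro ⟨hE, hE0⟩ P hP
    exact lintegral_le_one_of_mem_U0plus hP he_meas hE
      (mul_le_of_le_one_left' (ENNReal.ofReal_le_one.2 hE0))

/-- **polar of `𝒰₀⁺` and `𝒰₀₀⁺`.** For Borel measurable `E : [0,∞) → [0,∞)`:
(i) `∫ E dP ≤ 1` for all `P ∈ 𝒰₀₀⁺` iff `∫₀ˣ E(t) dt ≤ x` for all `x > 0`;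
(ii) `∫ E dP ≤ 1` for all `P ∈ 𝒰₀⁺` iff `∫₀ˣ E(t) dt ≤ x` for all `x > 0` and `E(0) ≤ 1`.
(Integrals are taken in the extended reals.) -/
theorem stmt8 (E : ℝ → ℝ) (hmeas : Measurable E) (hE0 : ∀ x : ℝ, 0 ≤ x → 0 ≤ E x) :
    ((∀ P ∈ U00plus, ∫⁻ x : ℝ, ENNReal.ofReal (E x) ∂P ≤ 1) ↔
      (∀ x : ℝ, 0 < x →
        ∫⁻ t in Ioc (0 : ℝ) x, ENNReal.ofReal (E t) ≤ ENNReal.ofReal x)) ∧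
    ((∀ P ∈ U0plus, ∫⁻ x : ℝ, ENNReal.ofReal (E x) ∂P ≤ 1) ↔
      ((∀ x : ℝ, 0 < x →
        ∫⁻ t in Ioc (0 : ℝ) x, ENNReal.ofReal (E t) ≤ ENNReal.ofReal x) ∧ E 0 ≤ 1)) :=
  stmt8_general E hmeas
end

section
/- Let q : ℤ≥0 → [0,∞) satisfy ∑_n q(n) ≤ 1 (a subprobability mass function). Then the function E(n) = (n+1)·q(n) is an e-value for ℳ; that is, ∑_n (n+1) q(n) f_P(n) ≤ 1 for every P ∈ ℳ. -/
open MeasureTheory ENNReal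

/-- If `q : ℤ≥0 → [0,∞)` is a subprobability mass function
(`∑ q(n) ≤ 1`), then `E(n) = (n+1)·q(n)` is an e-value for `ℳ`:
`∑ (n+1) q(n) f_P(n) ≤ 1` for every `P ∈ ℳ`. -/
theorem stmt9 (q : ℕ → NNReal) (hq : ∑' n : ℕ, (q n : ℝ≥0∞) ≤ 1) :
    ∀ P ∈ MonotoneClass, ∑' n : ℕ, ((n : ℝ≥0∞) + 1) * (q n : ℝ≥0∞) * P {n} ≤ 1 := by
  rintro P ⟨hP, hmono⟩
  have hanti : ∀ k n : ℕ, k ≤ n → P {n} ≤ P {k} := by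
    intro k n h
    induction n with
    | zero => simp_all
    | succ m ih =>
      rcases Nat.lt_or_ge k (m + 1) with h' | h'
      · exact le_trans (hmono m) (ih (Nat.lt_succ_iff.mp h'))
      · have : k = m + 1 := le_antisymm h h'
        simp [this]
  have key : ∀ n : ℕ, ((n : ℝ≥0∞) + 1) * P {n} ≤ 1 := by
    intro n
    calc ((n : ℝ≥0∞) + 1) * P {n} = ∑ k ∈ Finset.range (n + 1), P {n} := by
          simp [Finset.sum_const, mul_comm]
      _ ≤ ∑ k ∈ Finset.range (n + 1), P {k} :=
          Finset.sum_le_sum fun k hk => hanti k n (Nat.lt_succ_iff.mp (Finset.mem_range.mp hk))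
      _ = P (↑(Finset.range (n + 1)) : Set ℕ) := by
          rw [← MeasureTheory.measure_biUnion_finset]
          · congr 1; ext x; simp
          · intro i _ j _ hij
            simp [Set.disjoint_singleton, hij]
          · intros; exact measurableSet_singleton _
      _ ≤ 1 := prob_le_one
  calc ∑' n : ℕ, ((n : ℝ≥0∞) + 1) * (q n : ℝ≥0∞) * P {n}
      ≤ ∑' n : ℕ, (q n : ℝ≥0∞) := by
        refine ENNReal.tsum_le_tsum fun n => ?_
        calc ((n : ℝ≥0∞) + 1) * (q n : ℝ≥0∞) * P {n}
            = (q n : ℝ≥0∞) * (((n : ℝ≥0∞) + 1) * P {n}) := by ring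
          _ ≤ (q n : ℝ≥0∞) * 1 := mul_le_mul_right (key n) _
          _ = q n := mul_one _
    _ ≤ 1 := hq
end

section
/- (i) A measure P on ℤ≥0 satisfies ∑_n (n+1) q(n) f_P(n) ≤ 1 for every q : ℤ≥0 → [0,∞) with ∑_n q(n) ≤ 1 if and only if f_P(n) ≤ 1/(n+1) for all n ∈ ℤ≥0. (ii) A function E : ℤ≥0 → [0,∞) satisfies ∑_n E(n) f_P(n) ≤ 1 for every measure P on ℤ≥0 with f_P(n) ≤ 1/(n+1) for all n, if and only if E(n) = (n+1)·q(n) for some q : ℤ≥0 → [0,∞) with ∑_n q(n) ≤ 1. -/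
open MeasureTheory ENNReal

lemma stmt10_aux1 (P : Measure ℕ) (hP : ∀ n : ℕ, P {n} ≤ ((n : ℝ≥0∞) + 1)⁻¹)
    (q : ℕ → NNReal) (hq : (∑' n : ℕ, (q n : ℝ≥0∞)) ≤ 1) :
    ∑' n : ℕ, ((n : ℝ≥0∞) + 1) * (q n : ℝ≥0∞) * P {n} ≤ 1 := by
  refine le_trans (ENNReal.tsum_le_tsum fun n => ?_) hq
  calc ((n : ℝ≥0∞) + 1) * (q n : ℝ≥0∞) * P {n}
      ≤ ((n : ℝ≥0∞) + 1) * (q n : ℝ≥0∞) * ((n : ℝ≥0∞) + 1)⁻¹ :=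
        mul_le_mul_right (hP n) _
    _ = (q n : ℝ≥0∞) * (((n : ℝ≥0∞) + 1) * ((n : ℝ≥0∞) + 1)⁻¹) := by ring
    _ = (q n : ℝ≥0∞) := by
        rw [ENNReal.mul_inv_cancel (by simp) (by finiteness), mul_one]

lemma stmt10_aux2 (P : Measure ℕ)
    (h : ∀ q : ℕ → NNReal, (∑' n : ℕ, (q n : ℝ≥0∞)) ≤ 1 →
        ∑' n : ℕ, ((n : ℝ≥0∞) + 1) * (q n : ℝ≥0∞) * P {n} ≤ 1)
    (n : ℕ) : P {n} ≤ ((n : ℝ≥0∞) + 1)⁻¹ := by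
  have h1 := h (fun m => if m = n then 1 else 0) (by simp [apply_ite ((↑) : NNReal → ℝ≥0∞)])
  rw [tsum_eq_single n (fun m hm => by simp [hm])] at h1
  norm_num at h1
  rw [ENNReal.le_inv_iff_mul_le, mul_comm]
  exact h1

/-- **bipolar relation between the basic inequality and `(x+1)q(x)`
functions.**
(i) A measure `P` on `ℤ≥0` satisfies `∑ₙ (n+1) q(n) f_P(n) ≤ 1` for every subprobability
mass function `q` iff `f_P(n) ≤ 1/(n+1)` for all `n`.
(ii) `E : ℤ≥0 → [0,∞)` satisfies `∑ₙ E(n) f_P(n) ≤ 1` for every measure `P` with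
`f_P(n) ≤ 1/(n+1)` for all `n`, iff `E(n) = (n+1)·q(n)` for some subprobability mass
function `q`. -/
theorem stmt10 :
    (∀ P : Measure ℕ,
      ((∀ q : ℕ → NNReal, (∑' n : ℕ, (q n : ℝ≥0∞)) ≤ 1 →
          ∑' n : ℕ, ((n : ℝ≥0∞) + 1) * (q n : ℝ≥0∞) * P {n} ≤ 1) ↔
        ∀ n : ℕ, P {n} ≤ ((n : ℝ≥0∞) + 1)⁻¹)) ∧
    (∀ E : ℕ → NNReal,
      ((∀ P : Measure ℕ, (∀ n : ℕ, P {n} ≤ ((n : ℝ≥0∞) + 1)⁻¹) →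
          ∑' n : ℕ, (E n : ℝ≥0∞) * P {n} ≤ 1) ↔
        ∃ q : ℕ → NNReal, (∑' n : ℕ, (q n : ℝ≥0∞)) ≤ 1 ∧
          ∀ n : ℕ, (E n : ℝ) = ((n : ℝ) + 1) * (q n : ℝ))) := by
  constructor
  · intro P
    exact ⟨stmt10_aux2 P, fun hP q hq => stmt10_aux1 P hP q hq⟩
  · intro E
    constructor
    · intro h
      set q : ℕ → NNReal := fun n => E n / ((n : NNReal) + 1) with hqdef
      refine ⟨q, ?_, ?_⟩
      · -- test measure with P {k} = (k+1)⁻¹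
        set P : Measure ℕ := Measure.sum fun n : ℕ => (((n : ℝ≥0∞) + 1)⁻¹) • (Measure.dirac n : Measure ℕ) with hPdef
        have hPk : ∀ k : ℕ, P {k} = ((k : ℝ≥0∞) + 1)⁻¹ := by
          intro k
          rw [hPdef, Measure.sum_apply _ (measurableSet_singleton k)]
          rw [tsum_eq_single k (fun m hm => by
            simp [Measure.dirac_apply' m (measurableSet_singleton k), hm])]
          simp
        have h1 := h P (fun k => (hPk k).le)
        have h2 : ∀ k : ℕ, (E k : ℝ≥0∞) * P {k} = (q k : ℝ≥0∞) := by
          intro k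
          rw [hPk k, hqdef]
          have : ((k : NNReal) + 1) ≠ 0 := by positivity
          rw [ENNReal.coe_div this]
          push_cast
          rw [ENNReal.div_eq_inv_mul, mul_comm]
        calc (∑' n : ℕ, (q n : ℝ≥0∞)) = ∑' n : ℕ, (E n : ℝ≥0∞) * P {n} := by
              exact tsum_congr fun n => (h2 n).symm
          _ ≤ 1 := h1
      · intro n
        have hne : ((n : ℝ) + 1) ≠ 0 := by positivity
        rw [hqdef]
        simp only [NNReal.coe_div]
        push_cast
        field_simp
    · rintro ⟨q, hq, hEq⟩ P hP
      have hE : ∀ n : ℕ, (E n : ℝ≥0∞) = ((n : ℝ≥0∞) + 1) * (q n : ℝ≥0∞) := by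
        intro n
        have : E n = ((n : NNReal) + 1) * q n := by
          ext; push_cast; exact hEq n
        rw [this]; push_cast; ring
      calc (∑' n : ℕ, (E n : ℝ≥0∞) * P {n})
          = ∑' n : ℕ, ((n : ℝ≥0∞) + 1) * (q n : ℝ≥0∞) * P {n} :=
            tsum_congr fun n => by rw [hE n]
        _ ≤ 1 := stmt10_aux1 P hP q hq
end

section
/- Fix θ ∈ ℤ and let q : ℤ → [0,∞) satisfy ∑_n q(n) ≤ 1 and be supported either on {n ∈ ℤ : n ≥ θ} or on {n ∈ ℤ : n ≤ θ} (i.e. q vanishes on one side of θ). Then the function E(x) = (|x − θ| + 1)·q(x) is an e-value for 𝒟_θ; that is, ∑_x (|x − θ| + 1) q(x) f_P(x) ≤ 1 for every P ∈ 𝒟_θ. -/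
open MeasureTheory ENNReal

/-!
A θ-unimodal mass function is monotone on each side of θ, so every atom on the segment between
θ and `x` weighs at least `f_P(x)`. These `|x - θ| + 1` atoms have total mass at most one, whence
`(|x - θ| + 1) f_P(x) ≤ 1` for every `x`, and summing against `q` gives the claim.
-/

theorem card_mul_measure_singleton_le_one {α : Type*} [MeasurableSpace α]
    [MeasurableSingletonClass α] {P : Measure α} [IsProbabilityMeasure P] {s : Finset α} {x : α}
    (hx : ∀ n ∈ s, P {x} ≤ P {n}) : (s.card : ℝ≥0∞) * P {x} ≤ 1 :=
  calc (s.card : ℝ≥0∞) * P {x} = s.card • P {x} := (nsmul_eq_mul _ _).symm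
    _ ≤ ∑ n ∈ s, P {n} := Finset.card_nsmul_le_sum s _ _ hx
    _ = P s := sum_measure_singleton
    _ ≤ 1 := prob_le_one

namespace UnimodalClass

variable {θ : ℤ} {P : Measure ℤ}

theorem monotoneOn_Iic (hP : P ∈ UnimodalClass θ) : MonotoneOn (fun n ↦ P {n}) (Set.Iic θ) :=
  monotoneOn_of_le_succ Set.ordConnected_Iic fun a _ _ ha ↦ by
    simpa [Order.succ_eq_add_one] using hP.2.1 (a + 1) ha

theorem antitoneOn_Ici (hP : P ∈ UnimodalClass θ) : AntitoneOn (fun n ↦ P {n}) (Set.Ici θ) :=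
  antitoneOn_of_succ_le Set.ordConnected_Ici fun a _ ha _ ↦ by
    simpa [Order.succ_eq_add_one] using hP.2.2 a ha

theorem natAbs_add_one_mul_le_one (hP : P ∈ UnimodalClass θ) (x : ℤ) :
    (((x - θ).natAbs : ℝ≥0∞) + 1) * P {x} ≤ 1 := by
  have := hP.1
  rcases le_total θ x with hθx | hxθ
  · have hcard : (Finset.Icc θ x).card = (x - θ).natAbs + 1 := by
      rw [Int.card_Icc]; omega
    simpa [hcard] using card_mul_measure_singleton_le_one (s := Finset.Icc θ x) fun n hn ↦ by
      rw [Finset.mem_Icc] at hn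
      exact antitoneOn_Ici hP hn.1 (hn.1.trans hn.2) hn.2
  · have hcard : (Finset.Icc x θ).card = (x - θ).natAbs + 1 := by
      rw [Int.card_Icc]; omega
    simpa [hcard] using card_mul_measure_singleton_le_one (s := Finset.Icc x θ) fun n hn ↦ by
      rw [Finset.mem_Icc] at hn
      exact monotoneOn_Iic hP (hn.1.trans hn.2) hn.2 hn.1

end UnimodalClass

theorem stmt11_general (θ : ℤ) (q : ℤ → NNReal) (hq : ∑' n : ℤ, (q n : ℝ≥0∞) ≤ 1) :
    ∀ P ∈ UnimodalClass θ,
      ∑' x : ℤ, (((x - θ).natAbs : ℝ≥0∞) + 1) * (q x : ℝ≥0∞) * P {x} ≤ 1 := by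
  intro P hP
  calc ∑' x : ℤ, (((x - θ).natAbs : ℝ≥0∞) + 1) * (q x : ℝ≥0∞) * P {x}
      = ∑' x : ℤ, (q x : ℝ≥0∞) * ((((x - θ).natAbs : ℝ≥0∞) + 1) * P {x}) := by
        congr 1 with x; ring
    _ ≤ ∑' x : ℤ, (q x : ℝ≥0∞) := ENNReal.tsum_le_tsum fun x ↦
        mul_le_of_le_one_right' (UnimodalClass.natAbs_add_one_mul_le_one hP x)
    _ ≤ 1 := hq

/-- Fix `θ ∈ ℤ` and let `q : ℤ → [0,∞)` be a subprobability mass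
function supported either on `{n ≥ θ}` or on `{n ≤ θ}`. Then `E(x) = (|x−θ|+1)·q(x)` is
an e-value for `𝒟_θ`: `∑ₓ (|x−θ|+1) q(x) f_P(x) ≤ 1` for every `P ∈ 𝒟_θ`. -/
theorem stmt11 (θ : ℤ) (q : ℤ → NNReal) (hq : ∑' n : ℤ, (q n : ℝ≥0∞) ≤ 1)
    (hsupp : (∀ n : ℤ, n < θ → q n = 0) ∨ (∀ n : ℤ, θ < n → q n = 0)) :
    ∀ P ∈ UnimodalClass θ,
      ∑' x : ℤ, (((x - θ).natAbs : ℝ≥0∞) + 1) * (q x : ℝ≥0∞) * P {x} ≤ 1 :=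
  stmt11_general θ q hq
end

section
/- Fix θ ∈ ℤ and α ∈ (0,1). Let T : ℤ → {0,1} be a level-α test of θ-unimodality, i.e. P({n : T(n) = 1}) ≤ α for every P ∈ 𝒟_θ. Then the acceptance set {n ∈ ℤ : T(n) = 0} is unbounded above and unbounded below: sup {n : T(n) = 0} = +∞ and inf {n : T(n) = 0} = −∞. -/
open MeasureTheory ENNReal

lemma count_inter_Icc (a b n : ℤ) :
    Measure.count ({n} ∩ Set.Icc a b) = if n ∈ Set.Icc a b then 1 else 0 := by
  split_ifs with h
  · rw [Set.inter_eq_self_of_subset_left (Set.singleton_subset_iff.mpr h),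
      Measure.count_singleton]
  · rw [Set.singleton_inter_eq_empty.mpr h, measure_empty]

lemma unifP (a b : ℤ) (s : Set ℤ) :
    ((((b + 1 - a).toNat : ℝ≥0∞))⁻¹ • Measure.count.restrict (Set.Icc a b)) s
      = ((b + 1 - a).toNat : ℝ≥0∞)⁻¹ * Measure.count (s ∩ Set.Icc a b) := by
  rw [Measure.smul_apply, Measure.restrict_apply .of_discrete, smul_eq_mul]

lemma unif_mem (θ a b : ℤ) (ha : a ≤ θ) (hb : θ ≤ b) :
    (((b + 1 - a).toNat : ℝ≥0∞)⁻¹ • Measure.count.restrict (Set.Icc a b)) ∈ UnimodalClass θ := by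
  have hc0 : (((b + 1 - a).toNat : ℝ≥0∞)) ≠ 0 := by
    rw [Ne, Nat.cast_eq_zero]; omega
  refine ⟨⟨?_⟩, ?_, ?_⟩
  · rw [unifP, Set.univ_inter, ← Finset.coe_Icc, Measure.count_apply_finset, Int.card_Icc]
    exact ENNReal.inv_mul_cancel hc0 (ENNReal.natCast_ne_top _)
  · intro n hn
    rw [unifP, unifP]
    refine mul_le_mul_right ?_ _
    rw [count_inter_Icc, count_inter_Icc]
    split_ifs with h1 h2
    · exact le_rfl
    · exfalso; simp only [Set.mem_Icc] at *; omega
    all_goals simp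
  · intro n hn
    rw [unifP, unifP]
    refine mul_le_mul_right ?_ _
    rw [count_inter_Icc, count_inter_Icc]
    split_ifs with h1 h2
    · exact le_rfl
    · exfalso; simp only [Set.mem_Icc] at *; omega
    all_goals simp

lemma arith (α : ℝ) (hα0 : 0 < α) (hα1 : α < 1) (K : ℕ) :
    ∃ N : ℕ, ¬ ((N : ℝ) ≤ α * (K + N + 1)) := by
  obtain ⟨N, hN⟩ := exists_nat_gt (α * (K + 2) / (1 - α))
  refine ⟨N, ?_⟩
  rw [div_lt_iff₀ (by linarith)] at hN
  push_neg
  nlinarith [hα0.le]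

lemma extract (α : ℝ) (hα0 : 0 ≤ α) (K N : ℕ)
    (h : (N : ℝ≥0∞) / ((K + N + 1 : ℕ) : ℝ≥0∞) ≤ ENNReal.ofReal α) :
    (N : ℝ) ≤ α * (K + N + 1) := by
  rw [ENNReal.div_le_iff (by simp) (ENNReal.natCast_ne_top _)] at h
  rw [← ENNReal.ofReal_natCast (K + N + 1), ← ENNReal.ofReal_mul hα0,
    ← ENNReal.ofReal_natCast N, ENNReal.ofReal_le_ofReal_iff (by positivity)] at h
  push_cast at h ⊢
  linarith

/-- Fix `θ ∈ ℤ` and `α ∈ (0,1)`. If `T : ℤ → {0,1}` is a level-α test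
of θ-unimodality, i.e. `P({n : T(n) = 1}) ≤ α` for all `P ∈ 𝒟_θ`, then the acceptance set
`{n : T(n) = 0}` is unbounded above and below. -/
theorem stmt12 (θ : ℤ) (α : ℝ) (hα0 : 0 < α) (hα1 : α < 1) (T : ℤ → Bool)
    (hT : ∀ P ∈ UnimodalClass θ, P {n : ℤ | T n = true} ≤ ENNReal.ofReal α) :
    ¬ BddAbove {n : ℤ | T n = false} ∧ ¬ BddBelow {n : ℤ | T n = false} := by
  constructor
  · rintro ⟨M, hM⟩
    have hMmax := le_max_left M θ
    set K : ℕ := (max M θ - θ).toNat with hKdef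
    have hKθ : (K : ℤ) = max M θ - θ := Int.toNat_of_nonneg (by simp)
    obtain ⟨N, hN⟩ := arith α hα0 hα1 K
    set b : ℤ := θ + K + N with hbdef
    have hb : θ ≤ b := by omega
    have hmem := unif_mem θ θ b le_rfl hb
    have hle := hT _ hmem
    have hsub : Set.Ioc (θ + (K : ℤ)) b ⊆ {n : ℤ | T n = true} := by
      intro n hn
      simp only [Set.mem_Ioc] at hn
      simp only [Set.mem_setOf_eq]
      by_contra h
      have h' : T n = false := by simpa using h
      have := hM h'
      omega
    have hsub2 : Set.Ioc (θ + (K : ℤ)) b ⊆ Set.Icc θ b := by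
      intro n hn
      simp only [Set.mem_Ioc, Set.mem_Icc] at *
      omega
    have hPS : (((b + 1 - θ).toNat : ℝ≥0∞)⁻¹ • Measure.count.restrict (Set.Icc θ b))
        (Set.Ioc (θ + (K : ℤ)) b) = ((K + N + 1 : ℕ) : ℝ≥0∞)⁻¹ * N := by
      rw [unifP, Set.inter_eq_self_of_subset_left hsub2, ← Finset.coe_Ioc,
        Measure.count_apply_finset, Int.card_Ioc]
      have e1 : (b + 1 - θ).toNat = K + N + 1 := by omega
      have e2 : (b - (θ + (K : ℤ))).toNat = N := by omega
      rw [e1, e2]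
    have hchain : ((K + N + 1 : ℕ) : ℝ≥0∞)⁻¹ * N ≤ ENNReal.ofReal α := by
      rw [← hPS]
      exact le_trans (measure_mono hsub) hle
    exact hN (extract α hα0.le K N (by rwa [div_eq_mul_inv, mul_comm]))
  · rintro ⟨M, hM⟩
    have hMmin := min_le_left M θ
    set K : ℕ := (θ - min M θ).toNat with hKdef
    have hKθ : (K : ℤ) = θ - min M θ := Int.toNat_of_nonneg (by simp)
    obtain ⟨N, hN⟩ := arith α hα0 hα1 K
    set a : ℤ := θ - K - N with hadef
    have ha : a ≤ θ := by omega
    have hmem := unif_mem θ a θ ha le_rfl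
    have hle := hT _ hmem
    have hsub : Set.Ico a (θ - (K : ℤ)) ⊆ {n : ℤ | T n = true} := by
      intro n hn
      simp only [Set.mem_Ico] at hn
      simp only [Set.mem_setOf_eq]
      by_contra h
      have h' : T n = false := by simpa using h
      have := hM h'
      omega
    have hsub2 : Set.Ico a (θ - (K : ℤ)) ⊆ Set.Icc a θ := by
      intro n hn
      simp only [Set.mem_Ico, Set.mem_Icc] at *
      omega
    have hPS : (((θ + 1 - a).toNat : ℝ≥0∞)⁻¹ • Measure.count.restrict (Set.Icc a θ))
        (Set.Ico a (θ - (K : ℤ))) = ((K + N + 1 : ℕ) : ℝ≥0∞)⁻¹ * N := by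
      rw [unifP, Set.inter_eq_self_of_subset_left hsub2, ← Finset.coe_Ico,
        Measure.count_apply_finset, Int.card_Ico]
      have e1 : (θ + 1 - a).toNat = K + N + 1 := by omega
      have e2 : (θ - (K : ℤ) - a).toNat = N := by omega
      rw [e1, e2]
    have hchain : ((K + N + 1 : ℕ) : ℝ≥0∞)⁻¹ * N ≤ ENNReal.ofReal α := by
      rw [← hPS]
      exact le_trans (measure_mono hsub) hle
    exact hN (extract α hα0.le K N (by rwa [div_eq_mul_inv, mul_comm]))
end

section
/- Let α ∈ (0,1), T_α = 2/α + 1, and φ ∈ ℤ. For x ∈ ℤ define CI_{α,φ}(x) = ℤ if x = φ, and CI_{α,φ}(x) = {θ ∈ ℤ : |θ − x| < T_α·|x − φ|} if x ≠ φ. Then for every θ ∈ ℤ and every P ∈ 𝒟_θ, P({x ∈ ℤ : θ ∈ CI_{α,φ}(x)}) ≥ 1 − α. Consequently, if φ ≠ 0, then for every θ ∈ ℤ and every P ∈ 𝒟_θ, P({x : θ ∈ CI_{α/2,φ}(x) ∩ CI_{α/2,−φ}(x)}) ≥ 1 − α, and the set CI_{α/2,φ}(x) ∩ CI_{α/2,−φ}(x)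 is finite for every x ∈ ℤ. -/
/-! Let `d = |θ - φ|`. If `θ ∉ CI_{α,φ}(x)`, the triangle inequality gives `|x - φ| ≤ αd/2` and
`|θ - x| ≥ w := (2 + α)d / (2 + 2α)`. Unimodality bounds the mass of such an `x` by `1/(w+1)`,
since the `|θ - x| + 1` points between `x` and `θ` are at least as likely as `x`. Since
`|x - φ| < d`, these points lie on the same side of `θ` as `φ`, so they have distinct distances
to `θ`, all in `[w, d + αd/2]` and different from `d`: there are at most `d + αd/2 - w ≤ αw` of
them, of total mass at most `α`. The intersected sets follow by a union bound over `±φ`, and are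
finite because `x` differs from `φ` or from `-φ`. -/

open MeasureTheory ENNReal

/-- The one-observation confidence set `CI_{α,φ}(x)`: all of `ℤ` if `x = φ`, and
`{θ : |θ − x| < (2/α + 1)·|x − φ|}` otherwise. -/
def CI (α : ℝ) (φ : ℤ) (x : ℤ) : Set ℤ :=
  if x = φ then Set.univ
  else {θ : ℤ | ((|θ - x| : ℤ) : ℝ) < (2 / α + 1) * ((|x - φ| : ℤ) : ℝ)}

namespace UnimodalClass

variable {θ : ℤ} {P : Measure ℤ}

lemma monotoneOn (hP : P ∈ UnimodalClass θ) : MonotoneOn (fun n => P {n}) (Set.Iic θ) :=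
  monotoneOn_of_le_add_one Set.ordConnected_Iic fun a _ _ ha =>
    by simpa using hP.2.1 (a + 1) ha

lemma antitoneOn (hP : P ∈ UnimodalClass θ) : AntitoneOn (fun n => P {n}) (Set.Ici θ) :=
  antitoneOn_of_add_one_le Set.ordConnected_Ici fun a _ ha _ => hP.2.2 a ha

lemma natAbs_add_one_mul_measure_singleton_le_one (hP : P ∈ UnimodalClass θ) (x : ℤ) :
    ((θ - x).natAbs + 1 : ℝ≥0∞) * P {x} ≤ 1 := by
  have : IsProbabilityMeasure P := hP.1
  have hle : ∀ y ∈ Finset.uIcc x θ, P {x} ≤ P {y} := by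
    intro y hy
    rw [Finset.mem_uIcc] at hy
    rcases le_total x θ with hxθ | hθx
    · simp only [inf_of_le_left hxθ, sup_of_le_right hxθ] at hy
      exact monotoneOn hP (Set.mem_Iic.2 hxθ) (Set.mem_Iic.2 hy.2) hy.1
    · simp only [inf_of_le_right hθx, sup_of_le_left hθx] at hy
      exact antitoneOn hP (Set.mem_Ici.2 hy.1) (Set.mem_Ici.2 hθx) hy.2
  calc ((θ - x).natAbs + 1 : ℝ≥0∞) * P {x} = (Finset.uIcc x θ).card • P {x} := by
        rw [Int.card_uIcc, nsmul_eq_mul]; push_cast; rfl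
    _ ≤ ∑ y ∈ Finset.uIcc x θ, P {y} := Finset.card_nsmul_le_sum _ _ _ hle
    _ = P (Finset.uIcc x θ) := sum_measure_singleton
    _ ≤ 1 := prob_le_one

end UnimodalClass

lemma card_add_le_of_forall_natAbs (S : Finset ℤ) {θ φ : ℤ} {u w : ℕ}
    (hw : w ≤ (θ - φ).natAbs)
    (hS : ∀ x ∈ S, x ≠ φ ∧ (x - φ).natAbs < (θ - φ).natAbs ∧ (x - φ).natAbs ≤ u ∧
      w ≤ (θ - x).natAbs) :
    S.card + w ≤ (θ - φ).natAbs + u := by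
  have hmaps : Set.MapsTo (fun x => (θ - x).natAbs) S
      ((Finset.Icc w ((θ - φ).natAbs + u)).erase (θ - φ).natAbs) := by
    intro x hx
    have := hS x hx
    simp only [Finset.coe_erase, Finset.coe_Icc, Set.mem_sdiff, Set.mem_Icc,
      Set.mem_singleton_iff]
    omega
  have hinj : Set.InjOn (fun x => (θ - x).natAbs) S := by
    intro x hx y hy hxy
    have := hS x hx
    have := hS y hy
    simp only at hxy
    omega
  have := Finset.card_le_card_of_injOn _ hmaps hinj
  rw [Finset.card_erase_of_mem (by simp [hw]), Nat.card_Icc] at this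
  omega

lemma notMem_CI_iff {α : ℝ} {φ x θ : ℤ} :
    θ ∉ CI α φ x ↔ x ≠ φ ∧ (2 / α + 1) * ((|x - φ| : ℤ) : ℝ) ≤ ((|θ - x| : ℤ) : ℝ) := by
  by_cases hx : x = φ <;> simp [CI, hx]

lemma CI_finite_of_ne (α : ℝ) {φ x : ℤ} (hx : x ≠ φ) : (CI α φ x).Finite := by
  set C := (2 / α + 1) * ((|x - φ| : ℤ) : ℝ)
  refine (Set.finite_Icc (x - ⌈C⌉) (x + ⌈C⌉)).subset fun θ hθ => ?_
  rw [CI, if_neg hx, Set.mem_ofPred_eq] at hθ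
  have : |θ - x| < ⌈C⌉ := by exact_mod_cast hθ.trans_le (Int.le_ceil C)
  rw [abs_lt] at this
  exact ⟨by omega, by omega⟩

lemma natAbs_bounds_of_notMem_CI {α : ℝ} (hα : 0 < α) {φ x θ : ℤ} (h : θ ∉ CI α φ x) :
    x ≠ φ ∧ 2 * ((x - φ).natAbs : ℝ) ≤ α * (θ - φ).natAbs ∧
      (2 + α) * ((θ - φ).natAbs : ℝ) ≤ (2 + 2 * α) * (θ - x).natAbs := by
  obtain ⟨hx, hT⟩ := notMem_CI_iff.1 h
  simp only [← Nat.cast_natAbs] at hT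
  set m : ℝ := ((x - φ).natAbs : ℝ)
  set d : ℝ := ((θ - φ).natAbs : ℝ)
  set e : ℝ := ((θ - x).natAbs : ℝ)
  have hed : e ≤ d + m := by unfold e d m; exact_mod_cast (by omega)
  have hde : d ≤ e + m := by unfold e d m; exact_mod_cast (by omega)
  have hme : (2 + α) * m ≤ α * e :=
    calc (2 + α) * m = α * ((2 / α + 1) * m) := by field_simp
      _ ≤ α * e := by gcongr
  exact ⟨hx, by nlinarith, by nlinarith⟩

lemma natCast_mul_inv_le_ofReal {n w : ℕ} {α : ℝ} (hα : 0 ≤ α) (h : (n : ℝ) ≤ α * (w + 1)) :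
    (n : ℝ≥0∞) * ((w : ℝ≥0∞) + 1)⁻¹ ≤ ENNReal.ofReal α := by
  rw [ENNReal.mul_inv_le_iff (by simp) (by simp), ← ENNReal.ofReal_natCast,
    ← ENNReal.ofReal_natCast w, ← ENNReal.ofReal_one,
    ← ENNReal.ofReal_add (by simp) zero_le_one, ← ENNReal.ofReal_mul hα]
  exact ENNReal.ofReal_le_ofReal h

lemma measure_compl_setOf_mem_CI_le {α : ℝ} (hα0 : 0 < α) (hα1 : α < 1) (φ : ℤ) {θ : ℤ}
    {P : Measure ℤ} (hP : P ∈ UnimodalClass θ) :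
    P {x | θ ∈ CI α φ x}ᶜ ≤ ENNReal.ofReal α := by
  classical
  set d := (θ - φ).natAbs
  set u := ⌊α * d / 2⌋₊
  set w := ⌈(2 + α) * d / (2 + 2 * α)⌉₊
  have hu : (u : ℝ) ≤ α * d / 2 := Nat.floor_le (by positivity)
  have hw : (2 + α) * d ≤ (2 + 2 * α) * w := by
    have := Nat.le_ceil ((2 + α) * (d : ℝ) / (2 + 2 * α))
    rw [div_le_iff₀ (by positivity)] at this
    linarith
  have hwd : w ≤ d := Nat.ceil_le.2 (by rw [div_le_iff₀ (by positivity)]; nlinarith)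
  have hbad : ∀ x, θ ∉ CI α φ x →
      x ≠ φ ∧ (x - φ).natAbs < d ∧ (x - φ).natAbs ≤ u ∧ w ≤ (θ - x).natAbs := by
    intro x hx
    obtain ⟨hxφ, hm, he⟩ := natAbs_bounds_of_notMem_CI hα0 hx
    have hm0 : (0 : ℝ) < (x - φ).natAbs := by
      exact_mod_cast Int.natAbs_pos.2 (sub_ne_zero.2 hxφ)
    refine ⟨hxφ, ?_, Nat.le_floor (by linarith),
      Nat.ceil_le.2 (by rw [div_le_iff₀ (by positivity)]; linarith)⟩
    exact_mod_cast (by nlinarith : ((x - φ).natAbs : ℝ) < d)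
  set S := (Finset.Icc (φ - u) (φ + u)).filter (fun x => θ ∉ CI α φ x)
  have hS : {x | θ ∈ CI α φ x}ᶜ ⊆ S := by
    intro x hx
    have := (hbad x hx).2.2.1
    simp only [S, Finset.coe_filter, Finset.mem_Icc]
    exact ⟨by omega, hx⟩
  have hcard : S.card + w ≤ d + u :=
    card_add_le_of_forall_natAbs S hwd fun x hx => hbad x (Finset.mem_filter.1 hx).2
  have hpt : ∀ x ∈ S, P {x} ≤ ((w : ℝ≥0∞) + 1)⁻¹ := by
    intro x hx
    rw [ENNReal.le_inv_iff_mul_le, mul_comm]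
    refine le_trans ?_ (UnimodalClass.natAbs_add_one_mul_measure_singleton_le_one hP x)
    gcongr
    exact_mod_cast (hbad x (Finset.mem_filter.1 hx).2).2.2.2
  have hcard_real : (S.card : ℝ) + w ≤ d + u := by exact_mod_cast hcard
  calc P {x | θ ∈ CI α φ x}ᶜ ≤ P S := measure_mono hS
    _ = ∑ x ∈ S, P {x} := sum_measure_singleton.symm
    _ ≤ S.card * ((w : ℝ≥0∞) + 1)⁻¹ := by simpa using Finset.sum_le_card_nsmul S _ _ hpt
    _ ≤ ENNReal.ofReal α := natCast_mul_inv_le_ofReal hα0.le (by linarith)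

lemma ofReal_one_sub_le_of_measure_compl_le {Ω : Type*} [MeasurableSpace Ω] {μ : Measure Ω}
    [IsProbabilityMeasure μ] {s : Set Ω} (hs : MeasurableSet s) {α : ℝ} (hα : 0 ≤ α)
    (h : μ sᶜ ≤ ENNReal.ofReal α) : ENNReal.ofReal (1 - α) ≤ μ s := by
  rw [ENNReal.ofReal_sub 1 hα, ENNReal.ofReal_one, tsub_le_iff_right,
    ← prob_add_prob_compl (μ := μ) hs]
  gcongr

/-- For `α ∈ (0,1)` and `φ ∈ ℤ`, `CI_{α,φ}` is a valid weak
`(1−α)`-confidence set for the mode: for every `θ` and every `P ∈ 𝒟_θ`,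
`P(θ ∈ CI_{α,φ}(X)) ≥ 1 − α`. Consequently, if `φ ≠ 0`, the intersection
`CI_{α/2,φ}(x) ∩ CI_{α/2,−φ}(x)` is a weak `(1−α)`-confidence set that is finite for
every `x`. -/
theorem stmt13 (α : ℝ) (hα0 : 0 < α) (hα1 : α < 1) (φ : ℤ) :
    (∀ θ : ℤ, ∀ P ∈ UnimodalClass θ,
      ENNReal.ofReal (1 - α) ≤ P {x : ℤ | θ ∈ CI α φ x}) ∧
    (φ ≠ 0 →
      (∀ θ : ℤ, ∀ P ∈ UnimodalClass θ,
        ENNReal.ofReal (1 - α) ≤ P {x : ℤ | θ ∈ CI (α / 2) φ x ∩ CI (α / 2) (-φ) x}) ∧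
      ∀ x : ℤ, (CI (α / 2) φ x ∩ CI (α / 2) (-φ) x).Finite) := by
  refine ⟨fun θ P hP => ?_, fun hφ => ⟨fun θ P hP => ?_, fun x => ?_⟩⟩
  · have := hP.1
    exact ofReal_one_sub_le_of_measure_compl_le .of_discrete hα0.le
      (measure_compl_setOf_mem_CI_le hα0 hα1 φ hP)
  · have := hP.1
    refine ofReal_one_sub_le_of_measure_compl_le .of_discrete hα0.le ?_
    have hhalf (ψ : ℤ) := measure_compl_setOf_mem_CI_le (half_pos hα0) (by linarith) ψ hP
    calc P {x | θ ∈ CI (α / 2) φ x ∩ CI (α / 2) (-φ) x}ᶜ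
        = P ({x | θ ∈ CI (α / 2) φ x}ᶜ ∪ {x | θ ∈ CI (α / 2) (-φ) x}ᶜ) := by
          rw [← Set.compl_inter]; rfl
      _ ≤ ENNReal.ofReal (α / 2) + ENNReal.ofReal (α / 2) :=
          (measure_union_le _ _).trans (add_le_add (hhalf φ) (hhalf (-φ)))
      _ = ENNReal.ofReal α := by
          rw [← ENNReal.ofReal_add (by positivity) (by positivity), add_halves]
  · rcases eq_or_ne x φ with rfl | hx
    · exact (CI_finite_of_ne _ (by omega)).subset Set.inter_subset_right
    · exact (CI_finite_of_ne _ hx).subset Set.inter_subset_left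
end

section
/- Let P be a measure on ℤ≥0 such that ∑_n E(n) f_P(n) ≤ 1 for every e-value E for ℳ, and let s : ℤ≥0 → ℤ≥0 satisfy s(n) ≥ n for all n. Then ∑_{n=0}^∞ f_P(s(n)) ≤ 1. -/
open MeasureTheory ENNReal

/-- An e-value for `ℳ`: a function `E : ℤ≥0 → [0,∞)` with `∑ₙ E(n) f_P(n) ≤ 1` for
every `P ∈ ℳ`. -/
def IsEValueM (E : ℕ → NNReal) : Prop :=
  ∀ P ∈ MonotoneClass, ∑' n : ℕ, (E n : ℝ≥0∞) * P {n} ≤ 1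

lemma fiber_count_sum (s : ℕ → ℕ) (hs : ∀ n : ℕ, n ≤ s n) (f : ℕ → ℝ≥0∞) :
    ∑' n : ℕ, (((Finset.range (n+1)).filter (fun k => s k = n)).card : ℝ≥0∞) * f n
      = ∑' k : ℕ, f (s k) := by
  have h1 : ∀ k : ℕ, f (s k) = ∑' n : ℕ, (if n = s k then f n else 0) := by
    intro k
    rw [tsum_eq_single (s k) (by intro b hb; simp [hb])]
    simp
  rw [tsum_congr h1, ENNReal.tsum_comm]
  congr 1
  ext n
  have h2 : ∀ k : ℕ, (if n = s k then f n else 0)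
      = (if n = s k then (1:ℝ≥0∞) else 0) * f n := by
    intro k; split <;> simp
  rw [tsum_congr h2, ENNReal.tsum_mul_right]
  congr 1
  rw [tsum_eq_sum (s := Finset.range (n+1)) (by
    intro k hk
    simp only [Finset.mem_range, not_lt] at hk
    have : n < s k := lt_of_lt_of_le (Nat.lt_of_succ_le hk) (hs k)
    simp [Nat.ne_of_lt this])]
  rw [Finset.sum_boole]
  norm_num
  congr 1
  apply Finset.filter_congr
  intro k _
  simp [eq_comm]

/-- If a measure `P` on `ℤ≥0` satisfies `∑ₙ E(n) f_P(n) ≤ 1` for every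
e-value `E` for `ℳ`, and `s : ℤ≥0 → ℤ≥0` satisfies `s(n) ≥ n` for all `n`, then
`∑ₙ f_P(s(n)) ≤ 1`. -/
theorem stmt16 (P : Measure ℕ)
    (hP : ∀ E : ℕ → NNReal, IsEValueM E → ∑' n : ℕ, (E n : ℝ≥0∞) * P {n} ≤ 1)
    (s : ℕ → ℕ) (hs : ∀ n : ℕ, n ≤ s n) :
    ∑' n : ℕ, P {s n} ≤ 1 := by
  set E : ℕ → NNReal := fun n => (((Finset.range (n+1)).filter (fun k => s k = n)).card : NNReal)
  have hcast : ∀ n, ((E n : ℝ≥0∞))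
      = (((Finset.range (n+1)).filter (fun k => s k = n)).card : ℝ≥0∞) := by
    intro n; simp [E]
  have hE : IsEValueM E := by
    intro Q hQ
    obtain ⟨hprob, hmono⟩ := hQ
    have hanti : ∀ m n : ℕ, n ≤ m → Q {m} ≤ Q {n} :=
      fun m n h => antitone_nat_of_succ_le (f := fun n => Q {n}) hmono h
    calc ∑' n : ℕ, (E n : ℝ≥0∞) * Q {n}
        = ∑' k : ℕ, Q {s k} := by
          simp_rw [hcast]; exact fiber_count_sum s hs (fun n => Q {n})
      _ ≤ ∑' k : ℕ, Q {k} := ENNReal.tsum_le_tsum (fun k => hanti (s k) k (hs k))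
      _ = Q Set.univ := by
          rw [← Set.iUnion_of_singleton ℕ]
          exact (measure_iUnion (fun i j hij => by simp [hij]) (fun i => measurableSet_singleton i)).symm
      _ = 1 := measure_univ
  have := hP E hE
  calc ∑' n : ℕ, P {s n} = ∑' n : ℕ, (E n : ℝ≥0∞) * P {n} := by
        simp_rw [hcast]; exact (fiber_count_sum s hs (fun n => P {n})).symm
    _ ≤ 1 := this
end

section
/- Let P be a measure on ℤ such that ∑_n E(n) f_P(n) ≤ 1 for every e-value E for 𝒟₀. Let s, t : ℤ≥1 → ℤ satisfy s(n) ≥ n and t(n) ≤ −n for all n ≥ 1, and let u ∈ ℤ. Then f_P(u) + ∑_{n=1}^∞ ( f_P(s(n)) + f_P(t(n)) ) ≤ 1. -/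
open MeasureTheory ENNReal

/-- `𝒟₀`: 0-unimodal probability distributions on `ℤ`: probability measures `P` with
`f_P(n−1) ≤ f_P(n)` for all `n ≤ 0` and `f_P(n) ≥ f_P(n+1)` for all `n ≥ 0`. -/
def UnimodalClass0 : Set (Measure ℤ) :=
  {P | IsProbabilityMeasure P ∧ (∀ n : ℤ, n ≤ 0 → P {n - 1} ≤ P {n}) ∧
    (∀ n : ℤ, 0 ≤ n → P {n + 1} ≤ P {n})}

/-- An e-value for `𝒟₀`: a function `E : ℤ → [0,∞)` with `∑ₙ E(n) f_P(n) ≤ 1` for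
every `P ∈ 𝒟₀`. -/
def IsEValueD0 (E : ℤ → NNReal) : Prop :=
  ∀ P ∈ UnimodalClass0, ∑' n : ℤ, (E n : ℝ≥0∞) * P {n} ≤ 1

/-!
Let `E(m) = μ{m}` for `μ = δ_u + ∑ₙ (δ_{s(n)} + δ_{t(n)})`, the number of occurrences of `m`
in the list `u, s(1), t(1), s(2), t(2), …`; it is finite because `|s(n)|, |t(n)| ≥ n`.
For a 0-unimodal `Q`, unimodality gives `Q{u} ≤ Q{0}`, `Q{s(n)} ≤ Q{n}` and `Q{t(n)} ≤ Q{-n}`,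
so `∑ E(m) Q{m} ≤ ∑ₘ Q{m} = 1`: `E` is an e-value for `𝒟₀`, and the hypothesis on `P`
applied to `E` gives the claim.
-/

lemma tsum_int_eq_add_tsum_nat (f : ℤ → ℝ≥0∞) :
    ∑' m, f m = f 0 + ∑' n : ℕ, (f (n + 1) + f (-(n + 1))) := by
  rw [tsum_of_add_one_of_neg_add_one ENNReal.summable ENNReal.summable, ENNReal.tsum_add]
  ring

lemma tsum_measure_singleton_eq_one {α : Type*} [MeasurableSpace α] [Countable α]
    [MeasurableSingletonClass α] (μ : Measure α) [IsProbabilityMeasure μ] :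
    ∑' a, μ {a} = 1 := by
  simpa using (lintegral_countable' (μ := μ) 1).symm

namespace UnimodalClass0

variable {Q : Measure ℤ}

lemma antitoneOn_Ici (hQ : Q ∈ UnimodalClass0) : AntitoneOn (fun n ↦ Q {n}) (Set.Ici 0) :=
  antitoneOn_of_succ_le Set.ordConnected_Ici fun a _ ha _ ↦ by
    simpa only [Order.succ_eq_add_one] using hQ.2.2 a ha

lemma monotoneOn_Iic (hQ : Q ∈ UnimodalClass0) : MonotoneOn (fun n ↦ Q {n}) (Set.Iic 0) :=
  monotoneOn_of_pred_le Set.ordConnected_Iic fun a _ ha _ ↦ by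
    simpa only [Order.pred_eq_sub_one] using hQ.2.1 a ha

lemma apply_singleton_le_apply_zero (hQ : Q ∈ UnimodalClass0) (u : ℤ) : Q {u} ≤ Q {0} := by
  rcases le_total 0 u with hu | hu
  · exact antitoneOn_Ici hQ Set.self_mem_Ici hu hu
  · exact monotoneOn_Iic hQ hu Set.self_mem_Iic hu

lemma apply_add_tsum_le_one (hQ : Q ∈ UnimodalClass0) {s t : ℕ → ℤ}
    (hs : ∀ n : ℕ, 1 ≤ n → (n : ℤ) ≤ s n) (ht : ∀ n : ℕ, 1 ≤ n → t n ≤ -(n : ℤ)) (u : ℤ) :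
    Q {u} + ∑' n : ℕ, (Q {s (n + 1)} + Q {t (n + 1)}) ≤ 1 := by
  have : IsProbabilityMeasure Q := hQ.1
  calc Q {u} + ∑' n : ℕ, (Q {s (n + 1)} + Q {t (n + 1)})
      ≤ Q {0} + ∑' n : ℕ, (Q {(n : ℤ) + 1} + Q {-((n : ℤ) + 1)}) := by
        refine add_le_add (apply_singleton_le_apply_zero hQ u) (ENNReal.tsum_le_tsum fun n ↦ ?_)
        have hsn := hs (n + 1) n.succ_pos
        have htn := ht (n + 1) n.succ_pos
        push_cast at hsn htn
        exact add_le_add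
          (antitoneOn_Ici hQ (Set.mem_Ici.2 (by omega)) (Set.mem_Ici.2 (by omega)) hsn)
          (monotoneOn_Iic hQ (Set.mem_Iic.2 (by omega)) (Set.mem_Iic.2 (by omega)) htn)
    _ = ∑' m, Q {m} := (tsum_int_eq_add_tsum_nat fun m ↦ Q {m}).symm
    _ = 1 := tsum_measure_singleton_eq_one Q

end UnimodalClass0

lemma lintegral_map_count {α β : Type*} [MeasurableSpace α] [DiscreteMeasurableSpace α]
    [MeasurableSpace β] [DiscreteMeasurableSpace β] (v : α → β) (g : β → ℝ≥0∞) :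
    ∫⁻ b, g b ∂Measure.count.map v = ∑' a, g (v a) := by
  rw [lintegral_map .of_discrete .of_discrete, lintegral_count]

lemma Int.finite_preimage_singleton_of_le_natAbs {v : ℕ → ℤ} (hv : ∀ n, n ≤ (v n).natAbs)
    (m : ℤ) : (v ⁻¹' {m}).Finite :=
  (Set.finite_Iic m.natAbs).subset fun n hn ↦ by
    rw [Set.mem_preimage, Set.mem_singleton_iff] at hn
    exact hn ▸ hv n

noncomputable def occurrenceMeasure (s t : ℕ → ℤ) (u : ℤ) : Measure ℤ :=
  Measure.dirac u + Measure.count.map (fun n : ℕ ↦ s (n + 1)) +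
    Measure.count.map (fun n : ℕ ↦ t (n + 1))

lemma lintegral_occurrenceMeasure (s t : ℕ → ℤ) (u : ℤ) (g : ℤ → ℝ≥0∞) :
    ∫⁻ m, g m ∂occurrenceMeasure s t u = g u + ∑' n : ℕ, (g (s (n + 1)) + g (t (n + 1))) := by
  rw [occurrenceMeasure, lintegral_add_measure, lintegral_add_measure, lintegral_dirac,
    lintegral_map_count, lintegral_map_count, ENNReal.tsum_add, add_assoc]

lemma occurrenceMeasure_singleton_ne_top {s t : ℕ → ℤ} (hs : ∀ n : ℕ, 1 ≤ n → (n : ℤ) ≤ s n)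
    (ht : ∀ n : ℕ, 1 ≤ n → t n ≤ -(n : ℤ)) (u m : ℤ) : occurrenceMeasure s t u {m} ≠ ∞ := by
  have hfin {v : ℕ → ℤ} (hv : ∀ n, n ≤ (v n).natAbs) : Measure.count.map v {m} ≠ ∞ := by
    rw [Measure.map_apply .of_discrete (measurableSet_singleton m)]
    exact (Measure.count_apply_lt_top.2 (Int.finite_preimage_singleton_of_le_natAbs hv m)).ne
  simp only [occurrenceMeasure, Measure.add_apply, ne_eq, add_eq_top, not_or]
  refine ⟨⟨measure_ne_top _ _, hfin fun n ↦ ?_⟩, hfin fun n ↦ ?_⟩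
  · have := hs (n + 1) (by omega); omega
  · have := ht (n + 1) (by omega); omega

/-- Let `P` be a measure on `ℤ` such that `∑ₙ E(n) f_P(n) ≤ 1` for every
e-value `E` for `𝒟₀`. Let `s, t : ℤ≥1 → ℤ` satisfy `s(n) ≥ n` and `t(n) ≤ −n` for all
`n ≥ 1`, and let `u ∈ ℤ`. Then `f_P(u) + ∑_{n=1}^∞ (f_P(s(n)) + f_P(t(n))) ≤ 1`. -/
theorem stmt17 (P : Measure ℤ)
    (hP : ∀ E : ℤ → NNReal, IsEValueD0 E → ∑' n : ℤ, (E n : ℝ≥0∞) * P {n} ≤ 1)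
    (s t : ℕ → ℤ) (hs : ∀ n : ℕ, 1 ≤ n → (n : ℤ) ≤ s n)
    (ht : ∀ n : ℕ, 1 ≤ n → t n ≤ -(n : ℤ)) (u : ℤ) :
    P {u} + ∑' n : ℕ, (P {s (n + 1)} + P {t (n + 1)}) ≤ 1 := by
  have hE (Q : Measure ℤ) :
      ∑' m, ((occurrenceMeasure s t u {m}).toNNReal : ℝ≥0∞) * Q {m}
        = Q {u} + ∑' n : ℕ, (Q {s (n + 1)} + Q {t (n + 1)}) := by
    simp_rw [coe_toNNReal (occurrenceMeasure_singleton_ne_top hs ht u _), mul_comm _ (Q _),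
      ← lintegral_countable', lintegral_occurrenceMeasure]
  rw [← hE P]
  exact hP _ fun Q hQ ↦ (hE Q).trans_le (UnimodalClass0.apply_add_tsum_le_one hQ hs ht u)
end
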